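/- arXiv:2110.03812 — 4 statements merged into one kernel-verified Lean document; each statement's English description precedes it below -/
import Mathlib

section
/- Let D be a finite simple digraph on a finite vertex type V. Then Π(D) = {0, 1} if and only if D contains a cycle and every strongly connected component C of D with at least 2 vertices induces a directed cycle, i.e., writing k = |C|, there is a bijection c : ZMod k ≃ C such that for all u, w ∈ C, adj u w holds if and only if c.symm w = c.symm u + 1. -/
open Matrix Polynomial

/-- `lam` is a complementarity eigenvalue of the real square matrix `A`. -/
def isComplEig {V : Type*} [Fintype V] (A : Matrix V V ℝ) (lam : ℝ) : Prop :=
  ∃ x : V → ℝ, x ≠ 0 ∧ 0 ≤ x ∧ 0 ≤ A.mulVec x - lam • x ∧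
    ∑ i, x i * (A.mulVec x - lam • x) i = 0

-- Adjacency matrix of a digraph given by its arc relation.
open scoped Classical in
noncomputable def adjMat {V : Type*} (adj : V → V → Prop) : Matrix V V ℝ :=
  Matrix.of fun i j => if adj i j then 1 else 0

/-- Mutual reachability via the reflexive-transitive closure of the arc relation. -/
def mutualReach {V : Type*} (adj : V → V → Prop) (u v : V) : Prop :=
  Relation.ReflTransGen adj u v ∧ Relation.ReflTransGen adj v u

-- The strongly connected component of the vertex `v`.
open scoped Classical in
noncomputable def sccOf {V : Type*} [Fintype V] (adj : V → V → Prop) (v : V) : Finset V :=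
  Finset.univ.filter fun u => mutualReach adj u v

section Basic
open scoped Classical
variable {W : Type*} [Fintype W]

lemma adjMat_mulVec (r : W → W → Prop) (x : W → ℝ) (i : W) :
    (adjMat r).mulVec x i = ∑ j, if r i j then x j else 0 := by
  classical
  simp only [adjMat, Matrix.mulVec, dotProduct, Matrix.of_apply]
  refine Finset.sum_congr rfl fun j _ => ?_
  split <;> simp

lemma adjMat_mulVec_nonneg (r : W → W → Prop) {x : W → ℝ} (hx : ∀ i, 0 ≤ x i) (i : W) :
    0 ≤ (adjMat r).mulVec x i := by
  rw [adjMat_mulVec]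
  refine Finset.sum_nonneg fun j _ => ?_
  split
  · exact hx j
  · exact le_refl 0
  
lemma isComplEig_iff (r : W → W → Prop) (lam : ℝ) :
    isComplEig (adjMat r) lam ↔
      ∃ x : W → ℝ, x ≠ 0 ∧ (∀ i, 0 ≤ x i) ∧
        ∀ i, x i ≠ 0 → (adjMat r).mulVec x i = lam * x i := by
  constructor
  · rintro ⟨x, hx0, hxn, hge, hsum⟩
    have hxn' : ∀ i, 0 ≤ x i := fun i => hxn i
    have hge' : ∀ i, 0 ≤ (adjMat r).mulVec x i - lam * x i := by
      intro i
      have := hge i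
      simpa using this
    have hterm : ∀ i ∈ Finset.univ, 0 ≤ x i * ((adjMat r).mulVec x - lam • x) i :=
      fun i _ => mul_nonneg (hxn' i) (by simpa using hge' i)
    have hz := (Finset.sum_eq_zero_iff_of_nonneg hterm).mp hsum
    refine ⟨x, hx0, hxn', fun i hi => ?_⟩
    have := hz i (Finset.mem_univ i)
    rcases mul_eq_zero.mp this with h | h
    · exact absurd h hi
    · have : (adjMat r).mulVec x i - lam * x i = 0 := by simpa using h
      linarith
  · rintro ⟨x, hx0, hxn, heq⟩
    have hge : ∀ i, 0 ≤ (adjMat r).mulVec x i - lam * x i := by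
      intro i
      by_cases hi : x i = 0
      · rw [hi]
        simpa using adjMat_mulVec_nonneg r hxn i
      · rw [heq i hi]; ring_nf; exact le_refl 0
    refine ⟨x, hx0, fun i => hxn i, fun i => by simpa using hge i, ?_⟩
    refine Finset.sum_eq_zero fun i _ => ?_
    by_cases hi : x i = 0
    · rw [hi]; ring
    · have : (adjMat r).mulVec x i - lam * x i = 0 := by rw [heq i hi]; ring
      simp only [Pi.sub_apply, Pi.smul_apply, smul_eq_mul]
      rw [show (adjMat r).mulVec x i - lam * x i = 0 from this]
      ring

end Basic

section ZModStuff

/-- iterating `+1` through an equivalence with `ZMod m`. -/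
lemma succ_iterate {m : ℕ} [NeZero m] {W : Type*} (e : ZMod m ≃ W) :
    ∀ (t : ℕ) (a : W), (fun w => e (e.symm w + 1))^[t] a = e (e.symm a + t) := by
  intro t
  induction t with
  | zero => intro a; simp
  | succ t ih =>
    intro a
    rw [Function.iterate_succ_apply', ih a]
    simp only [Equiv.symm_apply_apply]
    push_cast
    ring_nf

lemma succ_iterate_card {m : ℕ} [NeZero m] {W : Type*} (e : ZMod m ≃ W) (a : W) :
    (fun w => e (e.symm w + 1))^[m] a = a := by
  rw [succ_iterate e m a, ZMod.natCast_self, add_zero, Equiv.apply_symm_apply]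

lemma orbit_full {m : ℕ} [NeZero m] {W : Type*} (e : ZMod m ≃ W)
    (T : Set W) (a0 : W) (ha0 : a0 ∈ T)
    (hcl : ∀ w ∈ T, e (e.symm w + 1) ∈ T) : ∀ w, w ∈ T := by
  set s : W → W := fun w => e (e.symm w + 1) with hs
  have hiter : ∀ t, s^[t] a0 ∈ T := by
    intro t
    induction t with
    | zero => exact ha0
    | succ t ih => rw [Function.iterate_succ_apply']; exact hcl _ ih
  intro w
  have key : s^[(e.symm w - e.symm a0).val] a0 = w := by
    rw [hs, succ_iterate e _ a0, ZMod.natCast_rightInverse _]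
    rw [add_sub_cancel, Equiv.apply_symm_apply]
  rw [← key]; exact hiter _

/-- periodic point of minimal period `p` gives an injective `ZMod p`-indexed cycle. -/
lemma zmod_cycle {W : Type*} (f : W → W) (v : W) (p : ℕ) (hp : 1 < p)
    (hper : f^[p] v = v) (hmin : ∀ q, 0 < q → q < p → f^[q] v ≠ v) :
    (∀ t, f^[t % p] v = f^[t] v) ∧
    Function.Injective (fun i : ZMod p => f^[i.val] v) ∧
    ∀ i : ZMod p, f^[(i + 1).val] v = f (f^[i.val] v) := by
  haveI : NeZero p := ⟨by omega⟩
  haveI : Fact (1 < p) := ⟨hp⟩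
  have hmul : ∀ k, f^[p * k] v = v := by
    intro k
    induction k with
    | zero => simp
    | succ k ih =>
      have : p * (k + 1) = p * k + p := by ring
      rw [this, Function.iterate_add_apply, hper, ih]
  have hmod : ∀ t, f^[t % p] v = f^[t] v := by
    intro t
    conv_rhs => rw [← Nat.mod_add_div t p]
    rw [Function.iterate_add_apply, hmul]
  refine ⟨hmod, ?_, ?_⟩
  · intro i j hij
    simp only at hij
    -- wlog via helper
    have key : ∀ a b : ZMod p, a.val ≤ b.val → f^[a.val] v = f^[b.val] v → a = b := by
      intro a b hab h
      rcases eq_or_lt_of_le hab with heq | hlt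
      · have : (a.val : ZMod p) = (b.val : ZMod p) := by rw [heq]
        rwa [ZMod.natCast_rightInverse a, ZMod.natCast_rightInverse b] at this
      · exfalso
        have hbp : b.val < p := ZMod.val_lt b
        have h1 : f^[p - b.val] (f^[b.val] v) = v := by
          rw [← Function.iterate_add_apply, Nat.sub_add_cancel hbp.le, hper]
        have h2 : f^[p - b.val + a.val] v = v := by
          rw [Function.iterate_add_apply, h, h1]
        exact hmin (p - b.val + a.val) (by omega) (by omega) h2
    rcases le_total i.val j.val with h | h
    · exact key i j h hij
    · exact (key j i h hij.symm).symm
  · intro i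
    have : (i + 1).val = (i.val + 1) % p := by
      rw [ZMod.val_add, ZMod.val_one]
    rw [this, hmod, Function.iterate_succ_apply']

end ZModStuff

section Scc
variable {V : Type*} [Fintype V] (adj : V → V → Prop)

lemma mem_sccOf_iff {u v : V} : u ∈ sccOf adj v ↔ mutualReach adj u v := by
  simp [sccOf]

lemma self_mem_sccOf (v : V) : v ∈ sccOf adj v :=
  (mem_sccOf_iff adj).mpr ⟨Relation.ReflTransGen.refl, Relation.ReflTransGen.refl⟩

/-- paths between members of an SCC can be taken inside the SCC. -/
lemma rtg_subtype (v : V) {u w : V} (hw : w ∈ sccOf adj v)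
    (h : Relation.ReflTransGen adj u w) :
    ∀ (hu : u ∈ sccOf adj v),
      Relation.ReflTransGen (fun a b : ↥(sccOf adj v) => adj a.1 b.1) ⟨u, hu⟩ ⟨w, hw⟩ := by
  induction h using Relation.ReflTransGen.head_induction_on with
  | refl => intro hu; exact Relation.ReflTransGen.refl
  | head h' hrest ih =>
    rename_i a b
    intro ha
    have haw := (mem_sccOf_iff adj).mp ha
    have hww := (mem_sccOf_iff adj).mp hw
    have hb : b ∈ sccOf adj v := by
      refine (mem_sccOf_iff adj).mpr ⟨hrest.trans hww.1, ?_⟩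
      exact haw.2.tail h'
    exact Relation.ReflTransGen.head h' (ih hb)

lemma sccOf_connected (v : V) (a b : ↥(sccOf adj v)) :
    Relation.ReflTransGen (fun a b : ↥(sccOf adj v) => adj a.1 b.1) a b := by
  obtain ⟨a, ha⟩ := a
  obtain ⟨b, hb⟩ := b
  have h1 : Relation.ReflTransGen adj a b :=
    (((mem_sccOf_iff adj).mp ha).1).trans ((mem_sccOf_iff adj).mp hb).2
  exact rtg_subtype adj v hb h1 ha
end Scc
section PF
open scoped Classical
variable {W : Type*} [Fintype W]

/-- one step of the positivity-improving map `x ↦ x + Bx`. -/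
noncomputable def Phi {W : Type*} [Fintype W] (r : W → W → Prop) : (W → ℝ) → (W → ℝ) :=
  fun x => x + (adjMat r).mulVec x

lemma Phi_apply (r : W → W → Prop) (x : W → ℝ) (i : W) :
    Phi r x i = x i + (adjMat r).mulVec x i := rfl

lemma Phi_add_smul (r : W → W → Prop) (u v : W → ℝ) (c : ℝ) :
    Phi r (u + c • v) = Phi r u + c • Phi r v := by
  funext i
  simp only [Phi_apply, Pi.add_apply, Pi.smul_apply, smul_eq_mul]
  rw [Matrix.mulVec_add, Matrix.mulVec_smul]
  simp only [Pi.add_apply, Pi.smul_apply, smul_eq_mul]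
  ring

lemma Phi_lin (r : W → W → Prop) (k : ℕ) (u v : W → ℝ) (c : ℝ) :
    (Phi r)^[k] (u + c • v) = (Phi r)^[k] u + c • (Phi r)^[k] v := by
  induction k with
  | zero => simp
  | succ k ih =>
    rw [Function.iterate_succ_apply', ih, Function.iterate_succ_apply',
      Function.iterate_succ_apply']
    exact Phi_add_smul r _ _ _

lemma Phi_mulVec_comm1 (r : W → W → Prop) (y : W → ℝ) :
    (adjMat r).mulVec (Phi r y) = Phi r ((adjMat r).mulVec y) := by
  show (adjMat r).mulVec (y + (adjMat r).mulVec y) = _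
  rw [Matrix.mulVec_add]
  rfl

lemma Phi_mulVec_comm (r : W → W → Prop) (k : ℕ) (x : W → ℝ) :
    (adjMat r).mulVec ((Phi r)^[k] x) = (Phi r)^[k] ((adjMat r).mulVec x) := by
  induction k with
  | zero => simp
  | succ k ih =>
    rw [Function.iterate_succ_apply', Function.iterate_succ_apply', Phi_mulVec_comm1, ih]

lemma Phi_eig (r : W → W → Prop) (x : W → ℝ) (lam : ℝ)
    (h : ∀ i, (adjMat r).mulVec x i = lam * x i) (k : ℕ) :
    (Phi r)^[k] x = (1 + lam) ^ k • x := by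
  induction k with
  | zero => simp
  | succ k ih =>
    rw [Function.iterate_succ_apply', ih]
    funext i
    simp only [Phi_apply, Pi.smul_apply, smul_eq_mul]
    rw [Matrix.mulVec_smul]
    simp only [Pi.smul_apply, smul_eq_mul, h i]
    ring

lemma boundary (r : W → W → Prop) (hconn : ∀ u w : W, Relation.ReflTransGen r u w)
    (S : Finset W) (hne : S.Nonempty) (hnu : S ≠ Finset.univ) :
    ∃ i ∉ S, ∃ j ∈ S, r i j := by
  obtain ⟨u, hu⟩ := hne
  have hex : ∃ w, w ∉ S := by
    by_contra h
    push_neg at h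
    exact hnu (Finset.eq_univ_iff_forall.mpr h)
  obtain ⟨w, hw⟩ := hex
  have h := hconn w u
  clear hconn
  induction h using Relation.ReflTransGen.head_induction_on with
  | refl => exact absurd hu hw
  | head h' hrest ih =>
    rename_i a c
    by_cases hc : c ∈ S
    · exact ⟨a, hw, c, hc, h'⟩
    · exact ih hc

lemma Phi_nonneg (r : W → W → Prop) {x : W → ℝ} (hx : ∀ i, 0 ≤ x i) (i : W) :
    0 ≤ Phi r x i :=
  add_nonneg (hx i) (adjMat_mulVec_nonneg r hx i)

lemma Phi_pos (r : W → W → Prop) (hconn : ∀ u w : W, Relation.ReflTransGen r u w) :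
    ∀ (k : ℕ) (x : W → ℝ), (∀ i, 0 ≤ x i) → x ≠ 0 →
      Fintype.card W ≤ (Finset.univ.filter fun i => x i ≠ 0).card + k →
      ∀ i, 0 < (Phi r)^[k] x i := by
  intro k
  induction k with
  | zero =>
    intro x hx hx0 hcard i
    have hsupp : (Finset.univ.filter fun i => x i ≠ 0) = Finset.univ := by
      apply Finset.eq_of_subset_of_card_le (Finset.subset_univ _)
      rw [Finset.card_univ]
      omega
    have : i ∈ (Finset.univ.filter fun i => x i ≠ 0) := by
      rw [hsupp]; exact Finset.mem_univ i
    have hne := (Finset.mem_filter.mp this).2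
    simpa using lt_of_le_of_ne (hx i) (Ne.symm hne)
  | succ k ih =>
    intro x hx hx0 hcard i
    set y := Phi r x with hy
    have hyn : ∀ j, 0 ≤ y j := Phi_nonneg r hx
    have hxy : ∀ j, x j ≤ y j := fun j => le_add_of_nonneg_right (adjMat_mulVec_nonneg r hx j)
    have hsub : (Finset.univ.filter fun j => x j ≠ 0) ⊆ (Finset.univ.filter fun j => y j ≠ 0) := by
      intro j hj
      have hxj := (Finset.mem_filter.mp hj).2
      have : 0 < x j := lt_of_le_of_ne (hx j) (Ne.symm hxj)
      exact Finset.mem_filter.mpr ⟨Finset.mem_univ j, by have := hxy j; intro h; rw [h] at this; linarith⟩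
    have hy0 : y ≠ 0 := by
      obtain ⟨j, hj⟩ := Function.ne_iff.mp hx0
      have : 0 < x j := lt_of_le_of_ne (hx j) (Ne.symm hj)
      have := lt_of_lt_of_le this (hxy j)
      intro h
      rw [h] at this
      simp at this
    rw [Function.iterate_succ_apply]
    by_cases hfull : (Finset.univ.filter fun j => x j ≠ 0) = Finset.univ
    · apply ih y hyn hy0 _ i
      have h2 := hsub
      rw [hfull] at h2
      have := Finset.card_le_card h2
      rw [Finset.card_univ] at this
      omega
    · -- boundary growth
      have hne : (Finset.univ.filter fun j => x j ≠ 0).Nonempty := by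
        obtain ⟨j, hj⟩ := Function.ne_iff.mp hx0
        exact ⟨j, Finset.mem_filter.mpr ⟨Finset.mem_univ j, hj⟩⟩
      obtain ⟨a, ha, b, hb, hab⟩ := boundary r hconn _ hne hfull
      have hbx := (Finset.mem_filter.mp hb).2
      have hbpos : 0 < x b := lt_of_le_of_ne (hx b) (Ne.symm hbx)
      have hya : 0 < y a := by
        have h1 : 0 ≤ x a := hx a
        have h2 : x b ≤ (adjMat r).mulVec x a := by
          rw [adjMat_mulVec]
          have : (if r a b then x b else 0) = x b := by simp [hab]
          rw [← this]
          refine Finset.single_le_sum (f := fun j => if r a j then x j else 0)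
            (fun j _ => by split <;> simp [hx j]) (Finset.mem_univ b)
        have h3 : 0 < (adjMat r).mulVec x a := lt_of_lt_of_le hbpos h2
        have h4 : y a = x a + (adjMat r).mulVec x a := rfl
        linarith
      have hmem : a ∈ (Finset.univ.filter fun j => y j ≠ 0) :=
        Finset.mem_filter.mpr ⟨Finset.mem_univ a, by positivity⟩
      have hstrict : (Finset.univ.filter fun j => x j ≠ 0).card <
          (Finset.univ.filter fun j => y j ≠ 0).card := by
        apply Finset.card_lt_card
        constructor
        · exact hsub
        · intro hcontra
          exact (Finset.mem_filter.mp (hcontra hmem)).2 (by simpa using ha)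
      apply ih y hyn hy0 _ i
      omega

theorem pf_exists (r : W → W → Prop) [Nonempty W]
    (hconn : ∀ u w : W, Relation.ReflTransGen r u w) :
    ∃ (lam : ℝ) (x : W → ℝ), 0 ≤ lam ∧ (∀ i, 0 < x i) ∧
      ∀ i, (adjMat r).mulVec x i = lam * x i := by
  set n := Fintype.card W with hn
  have hnpos : 0 < n := Fintype.card_pos
  set M : ℝ := (n : ℝ) with hM
  have hMpos : (0:ℝ) < M := by rw [hM]; exact_mod_cast hnpos
  set B := adjMat r with hB
  set K : Set (ℝ × (W → ℝ)) := {p | 0 ≤ p.1 ∧ p.1 ≤ M ∧ (∀ i, 0 ≤ p.2 i) ∧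
    (∑ i, p.2 i) = 1 ∧ ∀ i, p.1 * p.2 i ≤ B.mulVec p.2 i} with hK
  -- continuity helpers
  have happ : ∀ i : W, Continuous fun p : ℝ × (W → ℝ) => p.2 i :=
    fun i => (continuous_apply i).comp continuous_snd
  have hmv : ∀ i : W, Continuous fun p : ℝ × (W → ℝ) => B.mulVec p.2 i := by
    intro i
    have heq : (fun p : ℝ × (W → ℝ) => B.mulVec p.2 i) =
        fun p => ∑ j, if r i j then p.2 j else 0 := by
      funext p; exact adjMat_mulVec r p.2 i
    rw [heq]
    apply continuous_finset_sum
    intro j _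
    by_cases h : r i j
    · simpa [h] using happ j
    · simpa [h] using continuous_const
  have hclosed : IsClosed K := by
    have h1 : IsClosed {p : ℝ × (W → ℝ) | 0 ≤ p.1} := isClosed_le continuous_const continuous_fst
    have h2 : IsClosed {p : ℝ × (W → ℝ) | p.1 ≤ M} := isClosed_le continuous_fst continuous_const
    have h3 : IsClosed {p : ℝ × (W → ℝ) | ∀ i, 0 ≤ p.2 i} := by
      have : {p : ℝ × (W → ℝ) | ∀ i, 0 ≤ p.2 i} = ⋂ i, {p | 0 ≤ p.2 i} := by
        ext p; simp
      rw [this]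
      exact isClosed_iInter fun i => isClosed_le continuous_const (happ i)
    have h4 : IsClosed {p : ℝ × (W → ℝ) | (∑ i, p.2 i) = 1} :=
      isClosed_eq (continuous_finset_sum _ fun i _ => happ i) continuous_const
    have h5 : IsClosed {p : ℝ × (W → ℝ) | ∀ i, p.1 * p.2 i ≤ B.mulVec p.2 i} := by
      have : {p : ℝ × (W → ℝ) | ∀ i, p.1 * p.2 i ≤ B.mulVec p.2 i} =
          ⋂ i, {p | p.1 * p.2 i ≤ B.mulVec p.2 i} := by ext p; simp
      rw [this]
      exact isClosed_iInter fun i => isClosed_le (continuous_fst.mul (happ i)) (hmv i)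
    have : K = {p : ℝ × (W → ℝ) | 0 ≤ p.1} ∩ ({p | p.1 ≤ M} ∩ ({p | ∀ i, 0 ≤ p.2 i} ∩
        ({p | (∑ i, p.2 i) = 1} ∩ {p | ∀ i, p.1 * p.2 i ≤ B.mulVec p.2 i}))) := by
      ext p
      simp only [hK, Set.mem_setOf_eq, Set.mem_inter_iff] <;> tauto
    rw [this]
    exact h1.inter (h2.inter (h3.inter (h4.inter h5)))
  have hbdd : Bornology.IsBounded K := by
    rw [isBounded_iff_forall_norm_le]
    refine ⟨M + 1, fun p hp => ?_⟩
    obtain ⟨hp1, hp2, hp3, hp4, hp5⟩ := hp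
    rw [Prod.norm_def]
    apply max_le
    · rw [Real.norm_eq_abs, abs_of_nonneg hp1]
      linarith
    · rw [pi_norm_le_iff_of_nonneg (by linarith)]
      intro i
      rw [Real.norm_eq_abs, abs_of_nonneg (hp3 i)]
      have : p.2 i ≤ ∑ j, p.2 j :=
        Finset.single_le_sum (fun j _ => hp3 j) (Finset.mem_univ i)
      rw [hp4] at this
      linarith
  have hKne : K.Nonempty := by
    refine ⟨(0, fun _ => (n : ℝ)⁻¹), ?_, ?_, ?_, ?_, ?_⟩
    · exact le_refl 0
    · exact le_of_lt hMpos
    · intro i; positivity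
    · rw [Finset.sum_const, Finset.card_univ, nsmul_eq_mul]
      exact mul_inv_cancel₀ (by exact_mod_cast hnpos.ne')
    · intro i
      rw [zero_mul]
      exact adjMat_mulVec_nonneg r (fun _ => by positivity) i
  obtain ⟨⟨lam, x⟩, hmem, hmax⟩ :=
    (Metric.isCompact_of_isClosed_isBounded hclosed hbdd).exists_isMaxOn hKne
      continuous_fst.continuousOn
  obtain ⟨hlam0, hlamM, hxn, hxsum, hxeig⟩ := hmem
  replace hlam0 : 0 ≤ lam := hlam0
  replace hlamM : lam ≤ M := hlamM
  replace hxn : ∀ i, 0 ≤ x i := hxn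
  replace hxsum : (∑ i, x i) = 1 := hxsum
  replace hxeig : ∀ i, lam * x i ≤ B.mulVec x i := hxeig
  have hx0 : x ≠ 0 := by
    intro h
    rw [h] at hxsum
    simp at hxsum
  have hsupp1 : 1 ≤ (Finset.univ.filter fun i => x i ≠ 0).card := by
    obtain ⟨j, hj⟩ := Function.ne_iff.mp hx0
    exact Finset.card_pos.mpr ⟨j, Finset.mem_filter.mpr ⟨Finset.mem_univ j, hj⟩⟩
  have hcard_ok : ∀ z : W → ℝ, z ≠ 0 →
      Fintype.card W ≤ (Finset.univ.filter fun i => z i ≠ 0).card + (n - 1) := by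
    intro z hz
    obtain ⟨j, hj⟩ := Function.ne_iff.mp hz
    have : 1 ≤ (Finset.univ.filter fun i => z i ≠ 0).card :=
      Finset.card_pos.mpr ⟨j, Finset.mem_filter.mpr ⟨Finset.mem_univ j, hj⟩⟩
    omega
  -- equality at the maximum
  have heig : ∀ i, B.mulVec x i = lam * x i := by
    by_contra hd0
    push_neg at hd0
    set d : W → ℝ := fun i => B.mulVec x i - lam * x i with hd
    have hdnn : ∀ i, 0 ≤ d i := fun i => by
      have := hxeig i; simp only [hd]; linarith
    have hdne : d ≠ 0 := by
      obtain ⟨i, hi⟩ := hd0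
      intro h
      have : d i = 0 := by rw [h]; rfl
      simp only [hd] at this
      exact hi (by linarith)
    set m := n - 1 with hm
    set y := (Phi r)^[m] x with hy
    set z := (Phi r)^[m] d with hz
    have hypos : ∀ i, 0 < y i := Phi_pos r hconn m x hxn hx0 (hcard_ok x hx0)
    have hzpos : ∀ i, 0 < z i := Phi_pos r hconn m d hdnn hdne (hcard_ok d hdne)
    have hrel : ∀ i, B.mulVec y i = lam * y i + z i := by
      have hdecomp : d = B.mulVec x + (-lam) • x := by
        funext i; simp only [hd, Pi.add_apply, Pi.smul_apply, smul_eq_mul]; ring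
      have h1 : z = (Phi r)^[m] (B.mulVec x) + (-lam) • (Phi r)^[m] x := by
        rw [hz, hdecomp, Phi_lin]
      have h2 : (Phi r)^[m] (B.mulVec x) = B.mulVec y := by
        rw [hy, Phi_mulVec_comm]
      intro i
      have := congrFun h1 i
      rw [h2] at this
      simp only [Pi.add_apply, Pi.smul_apply, smul_eq_mul] at this
      rw [this]; ring
    obtain ⟨i₀, _, hmin⟩ := Finset.exists_min_image Finset.univ (fun i => z i / y i)
      Finset.univ_nonempty
    set ε := z i₀ / y i₀ with hε
    have hεpos : 0 < ε := div_pos (hzpos i₀) (hypos i₀)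
    have hεle : ∀ i, ε * y i ≤ z i := by
      intro i
      have := hmin i (Finset.mem_univ i)
      exact (le_div_iff₀ (hypos i)).mp this
    set t := ∑ i, y i with ht
    have htpos : 0 < t := Finset.sum_pos (fun i _ => hypos i) Finset.univ_nonempty
    have hstep : ∀ i, (lam + ε) * y i ≤ B.mulVec y i := by
      intro i
      have := hεle i
      have := hrel i
      nlinarith [hypos i]
    -- the normalized vector is feasible with bigger lam
    have hfeas : ((lam + ε, fun i => t⁻¹ * y i) : ℝ × (W → ℝ)) ∈ K := by
      have hsum' : (∑ i, t⁻¹ * y i) = 1 := by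
        rw [← Finset.mul_sum, ← ht, inv_mul_cancel₀ htpos.ne']
      have hMbound : lam + ε ≤ M := by
        have h1 : (lam + ε) * t ≤ ∑ i, B.mulVec y i := by
          rw [ht, Finset.mul_sum]
          exact Finset.sum_le_sum fun i _ => hstep i
        have h2 : ∑ i, B.mulVec y i ≤ M * t := by
          have : ∀ i, B.mulVec y i ≤ t := by
            intro i
            rw [hB, adjMat_mulVec, ht]
            refine Finset.sum_le_sum fun j _ => ?_
            split
            · exact le_refl _
            · exact le_of_lt (hypos j)
          calc ∑ i, B.mulVec y i ≤ ∑ _i : W, t := Finset.sum_le_sum fun i _ => this i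
            _ = (n : ℝ) * t := by rw [Finset.sum_const, Finset.card_univ, nsmul_eq_mul]
            _ = M * t := by rw [hM]
        have := le_trans h1 h2
        exact le_of_mul_le_mul_right this htpos
      refine ⟨by linarith, hMbound,
        fun i => mul_nonneg (inv_nonneg.mpr htpos.le) (hypos i).le, hsum', ?_⟩
      intro i
      have h1 : B.mulVec (fun i => t⁻¹ * y i) i = t⁻¹ * B.mulVec y i := by
        have : (fun i => t⁻¹ * y i) = t⁻¹ • y := by funext j; simp
        rw [this, Matrix.mulVec_smul]
        simp
      rw [h1]
      have := hstep i
      have hti : 0 ≤ t⁻¹ := by positivity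
      calc (lam + ε) * (t⁻¹ * y i) = t⁻¹ * ((lam + ε) * y i) := by ring
        _ ≤ t⁻¹ * B.mulVec y i := by apply mul_le_mul_of_nonneg_left this hti
    have hcon := hmax hfeas
    simp only [Set.mem_setOf_eq] at hcon
    have : lam + ε ≤ lam := hcon
    linarith
  -- positivity of x at the maximum
  refine ⟨lam, x, hlam0, ?_, heig⟩
  have hiter : (Phi r)^[n-1] x = (1 + lam) ^ (n-1) • x := Phi_eig r x lam heig (n-1)
  have hpos := Phi_pos r hconn (n-1) x hxn hx0 (hcard_ok x hx0)
  intro i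
  have := hpos i
  rw [hiter] at this
  simp only [Pi.smul_apply, smul_eq_mul] at this
  have hc : 0 < (1 + lam) ^ (n-1) := by positivity
  nlinarith
end PF
open scoped Classical in
theorem stmt9 {V : Type*} [Fintype V] (adj : V → V → Prop) (hirr : Irreflexive adj) :
    {lam : ℝ | isComplEig (adjMat adj) lam} = {0, 1} ↔
      (∃ (k : ℕ) (c : ZMod k → V), 2 ≤ k ∧ Function.Injective c ∧
        ∀ i, adj (c i) (c (i + 1))) ∧
      ∀ v : V, 2 ≤ (sccOf adj v).card →
        ∃ c : ZMod ((sccOf adj v).card) ≃ ↥(sccOf adj v),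
          ∀ u w : ↥(sccOf adj v), adj u.1 w.1 ↔ c.symm w = c.symm u + 1 := by
  classical
  constructor
  · -- forward direction
    intro hPi
    have h1 : isComplEig (adjMat adj) 1 := by
      have : (1:ℝ) ∈ {lam : ℝ | isComplEig (adjMat adj) lam} := by
        rw [hPi]; right; rfl
      exact this
    refine ⟨?_, ?_⟩
    · -- D contains a cycle
      obtain ⟨x, hx0, hxn, heig⟩ := (isComplEig_iff adj 1).mp h1
      have hsucc : ∀ i, x i ≠ 0 → ∃ j, adj i j ∧ x j ≠ 0 := by
        intro i hi
        have hpos : 0 < x i := lt_of_le_of_ne (hxn i) (Ne.symm hi)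
        have h := heig i hi
        rw [adjMat_mulVec] at h
        have hne : (∑ j, if adj i j then x j else 0) ≠ 0 := by
          rw [h]; rw [one_mul]; exact hpos.ne'
        obtain ⟨j, _, hj⟩ := Finset.exists_ne_zero_of_sum_ne_zero hne
        by_cases hij : adj i j
        · exact ⟨j, hij, by simpa [hij] using hj⟩
        · simp [hij] at hj
      set f : V → V := fun i => if h : ∃ j, adj i j ∧ x j ≠ 0 then h.choose else i with hf
      have hfspec : ∀ i, x i ≠ 0 → adj i (f i) ∧ x (f i) ≠ 0 := by
        intro i hi
        have hex := hsucc i hi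
        rw [hf]
        simp only [dif_pos hex]
        exact hex.choose_spec
      obtain ⟨v0, hv0⟩ := Function.ne_iff.mp hx0
      have hiterx : ∀ t, x (f^[t] v0) ≠ 0 := by
        intro t; induction t with
        | zero => exact hv0
        | succ t ih => rw [Function.iterate_succ_apply']; exact (hfspec _ ih).2
      obtain ⟨a, b, hlt, heqab⟩ : ∃ a b, a < b ∧ f^[a] v0 = f^[b] v0 := by
        obtain ⟨a, b, hab, heqab⟩ := Finite.exists_ne_map_eq_of_infinite (fun t : ℕ => f^[t] v0)
        rcases lt_or_gt_of_ne hab with h | h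
        · exact ⟨a, b, h, heqab⟩
        · exact ⟨b, a, h, heqab.symm⟩
      have hper1 : f^[b - a] (f^[a] v0) = f^[a] v0 := by
        rw [← Function.iterate_add_apply, Nat.sub_add_cancel hlt.le]
        exact heqab.symm
      set v1 := f^[a] v0 with hv1
      have hx1 : ∀ t, x (f^[t] v1) ≠ 0 := by
        intro t
        rw [hv1, ← Function.iterate_add_apply]
        exact hiterx (t + a)
      have hPex : ∃ q, 0 < q ∧ f^[q] v1 = v1 := ⟨b - a, by omega, hper1⟩
      set p := Nat.find hPex with hp
      obtain ⟨hppos, hpper⟩ := Nat.find_spec hPex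
      have hpmin : ∀ q, 0 < q → q < p → f^[q] v1 ≠ v1 := by
        intro q h1' h2' h3'
        exact Nat.find_min hPex h2' ⟨h1', h3'⟩
      have hp2 : 1 < p := by
        by_contra h
        have hp1 : p = 1 := by omega
        have hfix : f v1 = v1 := by
          have h2 : f^[p] v1 = v1 := hpper
          rw [hp1] at h2; simpa using h2
        have hadj := (hfspec v1 (hx1 0)).1
        rw [hfix] at hadj
        exact hirr v1 hadj
      obtain ⟨hmod, hinj, hsucc'⟩ := zmod_cycle f v1 p hp2 hpper hpmin
      refine ⟨p, fun i : ZMod p => f^[i.val] v1, hp2, hinj, ?_⟩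
      intro i
      show adj (f^[i.val] v1) (f^[(i+1).val] v1)
      rw [hsucc' i]
      exact (hfspec _ (hx1 i.val)).1
    · -- each SCC with ≥ 2 vertices is an induced cycle
      intro v hv
      set C := sccOf adj v with hC
      set r : ↥C → ↥C → Prop := fun a b => adj a.1 b.1 with hr
      have hconn : ∀ a b : ↥C, Relation.ReflTransGen r a b := sccOf_connected adj v
      have hvC : v ∈ C := self_mem_sccOf adj v
      have hexsucc : ∀ a : ↥C, ∃ b : ↥C, r a b := by
        intro a
        obtain ⟨w, hwC, hwne⟩ := Finset.exists_mem_ne hv a.1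
        rcases Relation.ReflTransGen.cases_head (hconn a ⟨w, hwC⟩) with h | ⟨b, hb, _⟩
        · exact absurd (congrArg Subtype.val h).symm hwne
        · exact ⟨b, hb⟩
      by_cases huniq : ∀ (u b b' : ↥C), r u b → r u b' → b = b'
      · -- unique successor: C is an induced cycle
        set s : ↥C → ↥C := fun a => (hexsucc a).choose with hs
        have hsadj : ∀ a, r a (s a) := fun a => (hexsucc a).choose_spec
        have hsu : ∀ a b, r a b → b = s a := fun a b h => huniq a b (s a) h (hsadj a)
        have follow : ∀ a b : ↥C, Relation.ReflTransGen r a b → ∃ t, s^[t] a = b := by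
          intro a b h
          induction h with
          | refl => exact ⟨0, rfl⟩
          | tail _ hbc ih =>
            obtain ⟨t, ht⟩ := ih
            exact ⟨t + 1, by rw [Function.iterate_succ_apply', ht]; exact (hsu _ _ hbc).symm⟩
        set u0 : ↥C := ⟨v, hvC⟩ with hu0
        obtain ⟨t0, ht0⟩ := follow (s u0) u0 (hconn _ _)
        have hPex : ∃ q, 0 < q ∧ s^[q] u0 = u0 :=
          ⟨t0 + 1, Nat.succ_pos _, by rw [Function.iterate_succ_apply]; exact ht0⟩
        set p := Nat.find hPex with hp
        obtain ⟨hppos, hpper⟩ := Nat.find_spec hPex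
        have hpmin : ∀ q, 0 < q → q < p → s^[q] u0 ≠ u0 := by
          intro q h1' h2' h3'
          exact Nat.find_min hPex h2' ⟨h1', h3'⟩
        have hp2 : 1 < p := by
          by_contra h
          have hp1 : p = 1 := by omega
          have hfix : s u0 = u0 := by
            have h2 : s^[p] u0 = u0 := hpper
            rw [hp1] at h2; simpa using h2
          have := hsadj u0
          rw [hfix] at this
          exact hirr v this
        haveI : NeZero p := ⟨by omega⟩
        obtain ⟨hmod, hinj, hsucc'⟩ := zmod_cycle s u0 p hp2 hpper hpmin
        have hsurj : Function.Surjective (fun i : ZMod p => s^[i.val] u0) := by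
          intro b
          obtain ⟨t, ht⟩ := follow u0 b (hconn u0 b)
          refine ⟨(t : ZMod p), ?_⟩
          show s^[((t : ZMod p)).val] u0 = b
          rw [ZMod.val_natCast, hmod t]
          exact ht
        set e := Equiv.ofBijective _ ⟨hinj, hsurj⟩ with he
        have hpcard : p = C.card := by
          have := Fintype.card_congr e
          rwa [ZMod.card, Fintype.card_coe] at this
        rw [← hpcard]
        have hse : ∀ i : ZMod p, s (e i) = e (i + 1) := by
          intro i
          show s (s^[i.val] u0) = s^[(i+1).val] u0
          exact (hsucc' i).symm
        refine ⟨e, ?_⟩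
        intro u w
        constructor
        · intro h
          have hw : w = s u := hsu u w h
          have h2 : s u = e (e.symm u + 1) := by
            conv_lhs => rw [← e.apply_symm_apply u]
            rw [hse]
          rw [hw, h2, Equiv.symm_apply_apply]
        · intro h
          have hw : w = e (e.symm u + 1) := by rw [← h, e.apply_symm_apply]
          have h2 : e (e.symm u + 1) = s u := by rw [← hse, e.apply_symm_apply]
          rw [hw, h2]
          exact hsadj u
      · -- some vertex with two successors: contradiction via PF
        exfalso
        push_neg at huniq
        obtain ⟨u0, b, b', hb, hb', hne⟩ := huniq
        haveI : Nonempty ↥C := ⟨⟨v, hvC⟩⟩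
        obtain ⟨lam, x, hlam0, hxpos, heig⟩ := pf_exists r hconn
        set xbar : V → ℝ := fun u => if h : u ∈ C then x ⟨u, h⟩ else 0 with hxbar
        have hxbar_eq : ∀ (u : V) (hu : u ∈ C), xbar u = x ⟨u, hu⟩ := by
          intro u hu; rw [hxbar]; simp [hu]
        have hmem : isComplEig (adjMat adj) lam := by
          rw [isComplEig_iff]
          refine ⟨xbar, ?_, ?_, ?_⟩
          · intro h
            have := congrFun h v
            rw [hxbar_eq v hvC] at this
            exact (hxpos ⟨v, hvC⟩).ne' this
          · intro i
            by_cases h : i ∈ C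
            · rw [hxbar_eq i h]; exact (hxpos _).le
            · rw [hxbar]; simp [h]
          · intro i hi
            have hiC : i ∈ C := by
              by_contra h
              apply hi
              rw [hxbar]; simp [h]
            have hkey : (adjMat adj).mulVec xbar i = (adjMat r).mulVec x ⟨i, hiC⟩ := by
              rw [adjMat_mulVec, adjMat_mulVec]
              have h1 : ∑ j ∈ C, (if adj i j then xbar j else 0) =
                  ∑ j : V, (if adj i j then xbar j else 0) :=
                Finset.sum_subset (Finset.subset_univ C)
                  (fun j _ hj => by rw [hxbar]; simp [hj])
              rw [← h1, ← Finset.sum_coe_sort C (fun j => if adj i j then xbar j else 0)]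
              refine Finset.sum_congr rfl fun j _ => ?_
              rw [hxbar_eq j.1 j.2]
            rw [hkey, heig ⟨i, hiC⟩, hxbar_eq i hiC]
        have hlam01 : lam = 0 ∨ lam = 1 := by
          have : lam ∈ ({0, 1} : Set ℝ) := by rw [← hPi]; exact hmem
          simpa using this
        have hBub : ∀ (a c : ↥C), r a c → x c ≤ (adjMat r).mulVec x a := by
          intro a c h
          rw [adjMat_mulVec]
          have h0 : x c = (if r a c then x c else 0) := by simp [h]
          rw [h0]
          exact Finset.single_le_sum (f := fun j => if r a j then x j else 0)
            (fun j _ => by split <;> simp [(hxpos j).le]) (Finset.mem_univ c)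
        rcases hlam01 with h0 | h1
        · have hz := heig u0
          rw [h0, zero_mul] at hz
          have h2 := hBub u0 b hb
          have h3 := hxpos b
          rw [hz] at h2
          linarith
        · have hmono : ∀ a c : ↥C, Relation.ReflTransGen r a c → x c ≤ x a := by
            intro a c h
            induction h with
            | refl => exact le_refl _
            | tail _ hbc ih =>
              have h2 := hBub _ _ hbc
              rw [heig, h1, one_mul] at h2
              exact le_trans h2 ih
          have hconst : ∀ a c : ↥C, x a = x c := fun a c =>
            le_antisymm (hmono c a (hconn c a)) (hmono a c (hconn a c))
          have hsum2 : x b + x b' ≤ (adjMat r).mulVec x u0 := by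
            rw [adjMat_mulVec, ← Finset.sum_filter]
            have hsubpair : ({b, b'} : Finset ↥C) ⊆ Finset.univ.filter (fun j => r u0 j) := by
              intro j hj
              simp only [Finset.mem_insert, Finset.mem_singleton] at hj
              rcases hj with rfl | rfl <;> simp [Finset.mem_filter, hb, hb']
            calc x b + x b' = ∑ j ∈ ({b, b'} : Finset ↥C), x j := (Finset.sum_pair hne).symm
              _ ≤ ∑ j ∈ Finset.univ.filter (fun j => r u0 j), x j :=
                Finset.sum_le_sum_of_subset_of_nonneg hsubpair (fun j _ _ => (hxpos j).le)
          rw [heig, h1, one_mul] at hsum2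
          have e1 : x b = x u0 := hconst b u0
          have e2 : x b' = x u0 := hconst b' u0
          have := hxpos u0
          linarith
  · -- backward direction
    rintro ⟨⟨k, c, hk2, hcinj, hcadj⟩, hscc⟩
    haveI : NeZero k := ⟨by omega⟩
    haveI : Fact (1 < k) := ⟨hk2⟩
    have hreach : ∀ (i : ZMod k) (n : ℕ), Relation.ReflTransGen adj (c i) (c (i + n)) := by
      intro i n
      induction n with
      | zero => simpa using Relation.ReflTransGen.refl
      | succ n ih =>
        have hcast : (i + ((n + 1 : ℕ) : ZMod k)) = (i + (n : ℕ)) + 1 := by push_cast; ring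
        rw [hcast]
        exact ih.tail (hcadj (i + (n : ℕ)))
    have hreach2 : ∀ i j : ZMod k, Relation.ReflTransGen adj (c i) (c j) := by
      intro i j
      have := hreach i ((j - i).val)
      rwa [ZMod.natCast_rightInverse _, add_sub_cancel] at this
    set v0 := c 0 with hv0def
    have hv0C : v0 ∈ sccOf adj v0 := self_mem_sccOf adj v0
    have hc1C : c 1 ∈ sccOf adj v0 :=
      (mem_sccOf_iff adj).mpr ⟨hreach2 1 0, hreach2 0 1⟩
    have hcard2 : 2 ≤ (sccOf adj v0).card := by
      refine Finset.one_lt_card.mpr ⟨v0, hv0C, c 1, hc1C, fun h => ?_⟩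
      have := hcinj h
      exact zero_ne_one this
    ext lam
    simp only [Set.mem_setOf_eq, Set.mem_insert_iff, Set.mem_singleton_iff]
    constructor
    · -- Π ⊆ {0, 1}
      intro hEig
      obtain ⟨x, hx0, hxn, heig⟩ := (isComplEig_iff adj lam).mp hEig
      by_cases hl0 : lam = 0
      · left; exact hl0
      right
      set S : Finset V := Finset.univ.filter (fun i => x i ≠ 0) with hS
      have hSne : S.Nonempty := by
        obtain ⟨j, hj⟩ := Function.ne_iff.mp hx0
        refine ⟨j, ?_⟩
        rw [hS]
        simp only [Finset.mem_filter, Finset.mem_univ, true_and]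
        exact hj
      have hSx : ∀ i ∈ S, 0 < x i := fun i hi =>
        lt_of_le_of_ne (hxn i) (Ne.symm (Finset.mem_filter.mp hi).2)
      have hSmem : ∀ i ∈ S, x i ≠ 0 := fun i hi => (Finset.mem_filter.mp hi).2
      have hlampos : 0 < lam := by
        obtain ⟨i, hi⟩ := hSne
        have h := heig i (hSmem i hi)
        have h2 : 0 ≤ (adjMat adj).mulVec x i := adjMat_mulVec_nonneg adj hxn i
        have h3 : 0 < x i := hSx i hi
        have h4 : 0 ≤ lam := by nlinarith
        exact lt_of_le_of_ne h4 (Ne.symm hl0)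
      have hSsucc : ∀ i ∈ S, ∃ j ∈ S, adj i j := by
        intro i hi
        have h := heig i (hSmem i hi)
        rw [adjMat_mulVec] at h
        have hpos : 0 < lam * x i := mul_pos hlampos (hSx i hi)
        have hne : (∑ j, if adj i j then x j else 0) ≠ 0 := by rw [h]; exact hpos.ne'
        obtain ⟨j, _, hj⟩ := Finset.exists_ne_zero_of_sum_ne_zero hne
        by_cases hadj : adj i j
        · refine ⟨j, ?_, hadj⟩
          rw [hS]
          simp only [Finset.mem_filter, Finset.mem_univ, true_and]
          simpa [hadj] using hj
        · simp [hadj] at hj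
      set rS : V → V → Prop := fun a b' => adj a b' ∧ a ∈ S ∧ b' ∈ S with hrS
      set Reach : V → Finset V := fun i => Finset.univ.filter (fun j => Relation.ReflTransGen rS i j) with hReach
      have hReach_mem : ∀ i j, j ∈ Reach i ↔ Relation.ReflTransGen rS i j := by
        intro i j; rw [hReach]; simp
      have hReach_self : ∀ i, i ∈ Reach i := fun i => (hReach_mem i i).mpr Relation.ReflTransGen.refl
      have hReach_S : ∀ i ∈ S, ∀ j ∈ Reach i, j ∈ S := by
        intro i hi j hj
        rcases Relation.ReflTransGen.cases_tail ((hReach_mem i j).mp hj) with h | ⟨cc, _, hcc⟩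
        · rwa [h]
        · exact hcc.2.2
      obtain ⟨i0, hi0S, hi0min⟩ := Finset.exists_min_image S (fun i => (Reach i).card) hSne
      set T := Reach i0 with hT
      have hTS : ∀ j ∈ T, j ∈ S := hReach_S i0 hi0S
      have hTclosed : ∀ j ∈ T, ∀ j', adj j j' → j' ∈ S → j' ∈ T := by
        intro j hj j' hadj hj'S
        exact (hReach_mem i0 j').mpr (((hReach_mem i0 j).mp hj).tail ⟨hadj, hTS j hj, hj'S⟩)
      have hTsucc : ∀ j ∈ T, ∃ j' ∈ T, adj j j' := by
        intro j hj
        obtain ⟨j', hj'S, hadj⟩ := hSsucc j (hTS j hj)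
        exact ⟨j', hTclosed j hj j' hadj hj'S, hadj⟩
      have hmutT : ∀ j ∈ T, mutualReach adj j i0 := by
        intro j hj
        have hsub : Reach j ⊆ Reach i0 := by
          intro kk hk
          exact (hReach_mem i0 kk).mpr (((hReach_mem i0 j).mp hj).trans ((hReach_mem j kk).mp hk))
        have heqR : Reach j = Reach i0 := Finset.eq_of_subset_of_card_le hsub (hi0min j (hTS j hj))
        have hi0R : i0 ∈ Reach j := by rw [heqR]; exact hReach_self i0
        exact ⟨Relation.ReflTransGen.mono (r := rS) (p := adj) (fun a b'' h => h.1) _ _ ((hReach_mem j i0).mp hi0R),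
          Relation.ReflTransGen.mono (r := rS) (p := adj) (fun a b'' h => h.1) _ _ ((hReach_mem i0 j).mp hj)⟩
      have hTC : ∀ j ∈ T, j ∈ sccOf adj i0 := fun j hj => (mem_sccOf_iff adj).mpr (hmutT j hj)
      have hi0T : i0 ∈ T := hReach_self i0
      obtain ⟨j1, hj1T, hj1adj⟩ := hTsucc i0 hi0T
      have hcard2' : 2 ≤ (sccOf adj i0).card := by
        refine Finset.one_lt_card.mpr ⟨i0, hTC i0 hi0T, j1, hTC j1 hj1T, fun h => ?_⟩
        rw [← h] at hj1adj
        exact hirr i0 hj1adj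
      obtain ⟨e, he⟩ := hscc i0 hcard2'
      haveI : NeZero ((sccOf adj i0).card) := ⟨by omega⟩
      set s : ↥(sccOf adj i0) → ↥(sccOf adj i0) := fun a => e (e.symm a + 1) with hs
      have hs_adj : ∀ a, adj a.1 (s a).1 := by
        intro a
        refine (he a (s a)).mpr ?_
        rw [hs]
        simp
      have hs_uniq : ∀ a bb, adj a.1 bb.1 → bb = s a := by
        intro a bb h
        have h2 := (he a bb).mp h
        apply e.symm.injective
        rw [h2, hs]
        simp
      have hCT : ∀ a : ↥(sccOf adj i0), a.1 ∈ T := by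
        refine orbit_full e {a : ↥(sccOf adj i0) | a.1 ∈ T} ⟨i0, hTC i0 hi0T⟩ hi0T ?_
        intro a ha
        obtain ⟨j', hj'T, hadj⟩ := hTsucc a.1 ha
        have hj'C : j' ∈ sccOf adj i0 := hTC j' hj'T
        have hj'eq : (⟨j', hj'C⟩ : ↥(sccOf adj i0)) = s a := hs_uniq a ⟨j', hj'C⟩ hadj
        show ((s a : ↥(sccOf adj i0)) : V) ∈ T
        rw [← hj'eq]
        exact hj'T
      have heigC : ∀ a : ↥(sccOf adj i0), lam * x a.1 = x (s a).1 := by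
        intro a
        have haS : a.1 ∈ S := hTS a.1 (hCT a)
        have h := heig a.1 (hSmem a.1 haS)
        rw [adjMat_mulVec] at h
        have hpt : ∀ j : V, (if adj a.1 j then x j else 0) =
            (if j = (s a).1 then x (s a).1 else 0) := by
          intro j
          by_cases hadj : adj a.1 j
          · by_cases hjS : x j = 0
            · by_cases hj : j = (s a).1
              · rw [if_pos hadj, if_pos hj, ← hj, hjS]
              · rw [if_pos hadj, if_neg hj, hjS]
            · have hjSS : j ∈ S := by rw [hS]; simp [hjS]
              have hjT : j ∈ T := hTclosed a.1 (hCT a) j hadj hjSS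
              have hjC : j ∈ sccOf adj i0 := hTC j hjT
              have hjeq : (⟨j, hjC⟩ : ↥(sccOf adj i0)) = s a := hs_uniq a ⟨j, hjC⟩ hadj
              have hj : j = (s a).1 := congrArg Subtype.val hjeq
              rw [if_pos hadj, if_pos hj, hj]
          · have hj : j ≠ (s a).1 := by
              intro h'
              exact hadj (h' ▸ hs_adj a)
            rw [if_neg hadj, if_neg hj]
        rw [Finset.sum_congr rfl (fun j _ => hpt j)] at h
        rw [Finset.sum_ite_eq' Finset.univ ((s a).1) (fun _ => x (s a).1)] at h
        simp only [Finset.mem_univ, if_true] at h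
        exact h.symm
      have hiter2 : ∀ (t : ℕ) (a : ↥(sccOf adj i0)), lam ^ t * x a.1 = x ((s^[t]) a).1 := by
        intro t
        induction t with
        | zero => intro a; simp
        | succ t ih =>
          intro a
          rw [Function.iterate_succ_apply, ← ih (s a), ← heigC a]
          ring
      have hsm : ∀ a : ↥(sccOf adj i0), s^[(sccOf adj i0).card] a = a := by
        intro a
        rw [hs]
        exact succ_iterate_card e a
      have hfin := hiter2 ((sccOf adj i0).card) ⟨i0, hTC i0 hi0T⟩
      rw [hsm] at hfin
      have hxi0 : 0 < x i0 := hSx i0 hi0S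
      have hlm : lam ^ ((sccOf adj i0).card) = 1 := by
        have hf2 : lam ^ ((sccOf adj i0).card) * x i0 = x i0 := hfin
        have h2 : (lam ^ ((sccOf adj i0).card) - 1) * x i0 = 0 := by
          rw [sub_mul, one_mul, hf2]; ring
        rcases mul_eq_zero.mp h2 with h3 | h3
        · linarith
        · exact absurd h3 hxi0.ne'
      rcases lt_trichotomy lam 1 with h | h | h
      · exfalso
        have hlt : lam ^ ((sccOf adj i0).card) < 1 :=
          pow_lt_one₀ hlampos.le h (by omega)
        rw [hlm] at hlt
        exact lt_irrefl 1 hlt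
      · exact h
      · exfalso
        have hlt : 1 < lam ^ ((sccOf adj i0).card) := one_lt_pow₀ h (by omega)
        rw [hlm] at hlt
        exact lt_irrefl 1 hlt
    · -- {0, 1} ⊆ Π
      rintro (rfl | rfl)
      · -- 0 is a complementarity eigenvalue
        rw [isComplEig_iff]
        refine ⟨fun u => if u = v0 then 1 else 0, ?_, ?_, ?_⟩
        · intro h
          have := congrFun h v0
          simp at this
        · intro i
          dsimp only
          split <;> norm_num
        · intro i hi
          have hi0 : i = v0 := by
            by_contra h
            simp [h] at hi
          subst hi0
          rw [adjMat_mulVec, zero_mul]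
          refine Finset.sum_eq_zero fun j _ => ?_
          by_cases hj : j = v0
          · subst hj
            simp [hirr v0]
          · simp [hj]
      · -- 1 is a complementarity eigenvalue
        obtain ⟨e, he⟩ := hscc v0 hcard2
        haveI : NeZero ((sccOf adj v0).card) := ⟨by omega⟩
        set s : ↥(sccOf adj v0) → ↥(sccOf adj v0) := fun a => e (e.symm a + 1) with hs
        have hs_adj : ∀ a, adj a.1 (s a).1 := by
          intro a
          refine (he a (s a)).mpr ?_
          rw [hs]
          simp
        have hs_uniq : ∀ a bb, adj a.1 bb.1 → bb = s a := by
          intro a bb h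
          have h2 := (he a bb).mp h
          apply e.symm.injective
          rw [h2, hs]
          simp
        rw [isComplEig_iff]
        set xx : V → ℝ := fun u => if u ∈ sccOf adj v0 then 1 else 0 with hxx
        refine ⟨xx, ?_, ?_, ?_⟩
        · intro h
          have := congrFun h v0
          rw [hxx] at this
          simp [hv0C] at this
        · intro i
          rw [hxx]
          dsimp only
          split <;> norm_num
        · intro i hi
          have hiC : i ∈ sccOf adj v0 := by
            by_contra h
            apply hi
            rw [hxx]
            simp [h]
          have hpt : ∀ j : V, (if adj i j then xx j else 0) =
              (if j = (s ⟨i, hiC⟩).1 then 1 else 0) := by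
            intro j
            by_cases hadj : adj i j
            · by_cases hjC : j ∈ sccOf adj v0
              · have hjeq : (⟨j, hjC⟩ : ↥(sccOf adj v0)) = s ⟨i, hiC⟩ :=
                  hs_uniq ⟨i, hiC⟩ ⟨j, hjC⟩ hadj
                have hj : j = (s ⟨i, hiC⟩).1 := congrArg Subtype.val hjeq
                rw [if_pos hadj, if_pos hj, hxx]
                simp [hjC]
              · have hj : j ≠ (s ⟨i, hiC⟩).1 := by
                  intro h
                  exact hjC (h ▸ (s ⟨i, hiC⟩).2)
                rw [if_pos hadj, if_neg hj, hxx]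
                simp [hjC]
            · have hj : j ≠ (s ⟨i, hiC⟩).1 := by
                intro h'
                exact hadj (h' ▸ hs_adj ⟨i, hiC⟩)
              rw [if_neg hadj, if_neg hj]
          rw [adjMat_mulVec]
          rw [Finset.sum_congr rfl (fun j _ => hpt j)]
          rw [Finset.sum_ite_eq' Finset.univ ((s ⟨i, hiC⟩).1) (fun _ => (1:ℝ))]
          have : xx i = 1 := by rw [hxx]; simp [hiC]
          rw [this]
          simp
end

section
/- For all integers r, s ≥ 2, the characteristic polynomial of the adjacency matrix of the digraph ∞(r,s) equals X^{r+s−1} − X^{s−1} − X^{r−1}. -/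
open Matrix Polynomial

/-- Arc relation of the digraph `∞(r,s)`: the coalescence of the directed cycles
`C_r` and `C_s` at the vertex `0`, on the vertex set `{0, …, r+s-2}`. -/
def inftyAdj (r s : ℕ) : Fin (r + s - 1) → Fin (r + s - 1) → Prop := fun i j =>
  (j.val = i.val + 1 ∧ i.val ≤ r - 2) ∨
  (i.val = r - 1 ∧ j.val = 0) ∨
  (i.val = 0 ∧ j.val = r) ∨
  (j.val = i.val + 1 ∧ r ≤ i.val ∧ i.val ≤ r + s - 3) ∨
  (i.val = r + s - 2 ∧ j.val = 0)

section Aux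

lemma coe_cycleRange' {n : ℕ} (i j : Fin n) :
    (Fin.cycleRange i j : ℕ) =
      if j.val < i.val then j.val + 1 else if j.val = i.val then 0 else j.val := by
  cases n with
  | zero => exact j.elim0
  | succ m =>
    rw [Fin.cycleRange_apply]
    rcases lt_trichotomy j i with h | h | h
    · rw [if_pos h, if_pos (by exact h), Fin.val_add_one_of_lt (lt_of_lt_of_le h (Fin.le_last i))]
    · subst h; simp
    · rw [if_neg (not_lt.2 h.le), if_neg h.ne', if_neg (by omega), if_neg (by
        exact fun hv => absurd (Fin.ext hv) h.ne')]

lemma inv_cycleRange_apply {n : ℕ} (c j k : Fin n) (h : Fin.cycleRange c k = j) :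
    (Fin.cycleRange c)⁻¹ j = k := by
  rw [← h, Equiv.Perm.inv_def, Equiv.symm_apply_apply]

lemma valSigmaR (r s : ℕ) (hr : 2 ≤ r) (hs : 2 ≤ s) (j : Fin (r + s - 1)) :
    (((Fin.cycleRange (⟨r - 1, by omega⟩ : Fin (r + s - 1)))⁻¹) j).val =
      if j.val = 0 then r - 1 else if j.val < r then j.val - 1 else j.val := by
  have hj := j.isLt
  have hk : (if j.val = 0 then r - 1 else if j.val < r then j.val - 1 else j.val) < r + s - 1 := by
    split_ifs <;> omega
  rw [inv_cycleRange_apply _ j ⟨_, hk⟩ (Fin.ext ?_)]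
  rw [coe_cycleRange']
  simp only [Fin.val_mk]
  split_ifs <;> omega

lemma valSigmaS (r s : ℕ) (hr : 2 ≤ r) (hs : 2 ≤ s) (j : Fin (r + s - 1)) :
    (((Fin.cycleRange (⟨r - 1, by omega⟩ : Fin (r + s - 1))) *
      (Fin.cycleRange (⟨r + s - 2, by omega⟩ : Fin (r + s - 1)))⁻¹) j).val =
      if j.val = 0 then r + s - 2 else if j.val < r then j.val
        else if j.val = r then 0 else j.val - 1 := by
  have hj := j.isLt
  have hk1 : (if j.val = 0 then r + s - 2 else j.val - 1) < r + s - 1 := by split_ifs <;> omega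
  have h1 : (Fin.cycleRange (⟨r + s - 2, by omega⟩ : Fin (r + s - 1)))⁻¹ j = ⟨_, hk1⟩ := by
    apply inv_cycleRange_apply
    apply Fin.ext
    rw [coe_cycleRange']
    simp only [Fin.val_mk]
    split_ifs <;> omega
  rw [Equiv.Perm.mul_apply, h1, coe_cycleRange']
  simp only [Fin.val_mk]
  split_ifs <;> omega

lemma classify (r s : ℕ) (hr : 2 ≤ r) (hs : 2 ≤ s) (σ : Equiv.Perm (Fin (r + s - 1)))
    (h : ∀ i, σ i = i ∨ inftyAdj r s (σ i) i) :
    σ = 1 ∨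
    (∀ j : Fin (r + s - 1), (σ j).val =
      if j.val = 0 then r - 1 else if j.val < r then j.val - 1 else j.val) ∨
    (∀ j : Fin (r + s - 1), (σ j).val =
      if j.val = 0 then r + s - 2 else if j.val < r then j.val
        else if j.val = r then 0 else j.val - 1) := by
  have hmove : ∀ i, σ i ≠ i → σ (σ i) ≠ σ i := fun i hi hc => hi (σ.injective hc)
  have h1 : ∀ i : Fin (r + s - 1), σ i ≠ i → i.val ≠ 0 → i.val ≠ r →
      (σ i).val + 1 = i.val := by
    intro i hi h0 hrr
    rcases h i with he | ha
    · exact absurd he hi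
    · have hlt := (σ i).isLt
      rcases ha with ⟨e1, e2⟩ | ⟨e1, e2⟩ | ⟨e1, e2⟩ | ⟨e1, e2, e3⟩ | ⟨e1, e2⟩ <;> omega
  have h2 : ∀ i : Fin (r + s - 1), σ i ≠ i → i.val = r → (σ i).val = 0 := by
    intro i hi hir
    rcases h i with he | ha
    · exact absurd he hi
    · have hlt := (σ i).isLt
      rcases ha with ⟨e1, e2⟩ | ⟨e1, e2⟩ | ⟨e1, e2⟩ | ⟨e1, e2, e3⟩ | ⟨e1, e2⟩ <;> omega
  have h3 : ∀ i : Fin (r + s - 1), σ i ≠ i → i.val = 0 →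
      (σ i).val = r - 1 ∨ (σ i).val = r + s - 2 := by
    intro i hi hi0
    rcases h i with he | ha
    · exact absurd he hi
    · have hlt := (σ i).isLt
      rcases ha with ⟨e1, e2⟩ | ⟨e1, e2⟩ | ⟨e1, e2⟩ | ⟨e1, e2, e3⟩ | ⟨e1, e2⟩ <;> omega
  have hN : 0 < r + s - 1 := by omega
  set z : Fin (r + s - 1) := ⟨0, hN⟩ with hzdef
  by_cases hz : σ z = z
  · left
    have fixall : ∀ m : ℕ, ∀ i : Fin (r + s - 1), i.val = m → σ i = i := by
      intro m
      induction m using Nat.strong_induction_on with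
      | _ m IH =>
        intro i him
        by_contra hi
        have hσm := hmove i hi
        by_cases h0 : i.val = 0
        · exact hi (by rw [show i = z from Fin.ext h0]; exact hz)
        by_cases hir : i.val = r
        · have hv := h2 i hi hir
          exact hσm (IH (σ i).val (by omega) (σ i) rfl)
        · have hv := h1 i hi h0 hir
          exact hσm (IH (σ i).val (by omega) (σ i) rfl)
    exact Equiv.ext fun i => fixall i.val i rfl
  · rcases h3 z hz rfl with hc | hc
    · right; left
      have movedlow : ∀ m : ℕ, ∀ i : Fin (r + s - 1), i.val + m = r - 1 → σ i ≠ i := by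
        intro m
        induction m with
        | zero =>
          intro i hiv
          have hi : i = σ z := Fin.ext (by rw [hc]; omega)
          rw [hi]; exact hmove z hz
        | succ m IH =>
          intro i hiv
          have hjlt : i.val + 1 < r + s - 1 := by omega
          have hjm : σ ⟨i.val + 1, hjlt⟩ ≠ ⟨i.val + 1, hjlt⟩ := IH _ (by simp; omega)
          have hjv := h1 ⟨i.val + 1, hjlt⟩ hjm (by simp) (by simp; omega)
          have he : σ ⟨i.val + 1, hjlt⟩ = i := Fin.ext (by simp at hjv ⊢; omega)
          have := hmove _ hjm
          rw [he] at this
          exact this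
      have vlow : ∀ i : Fin (r + s - 1), i.val ≠ 0 → i.val < r → (σ i).val = i.val - 1 := by
        intro i h0 hlt
        have hm : σ i ≠ i := movedlow (r - 1 - i.val) i (by omega)
        have := h1 i hm h0 (by omega)
        omega
      have h1lt : 1 < r + s - 1 := by omega
      have hσ1 : (σ ⟨1, h1lt⟩).val = 0 := by
        have := vlow ⟨1, h1lt⟩ (by simp) (by simp; omega)
        simpa using this
      have hrlt : r < r + s - 1 := by omega
      have fixr : σ ⟨r, hrlt⟩ = ⟨r, hrlt⟩ := by
        by_contra hm
        have h0' := h2 _ hm rfl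
        have e1 : σ ⟨r, hrlt⟩ = z := Fin.ext h0'
        have e2 : σ ⟨1, h1lt⟩ = z := Fin.ext hσ1
        have := σ.injective (e1.trans e2.symm)
        have := congrArg Fin.val this
        simp at this
        omega
      have fixhigh : ∀ m : ℕ, ∀ i : Fin (r + s - 1), i.val = r + m → σ i = i := by
        intro m
        induction m with
        | zero =>
          intro i hiv
          have : i = ⟨r, hrlt⟩ := Fin.ext (by simpa using hiv)
          rw [this]; exact fixr
        | succ m IH =>
          intro i hiv
          by_contra hm
          have hv := h1 i hm (by omega) (by omega)
          have hprev : σ i = ⟨r + m, by omega⟩ := Fin.ext (by simp; omega)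
          have := hmove i hm
          rw [hprev] at this
          exact this (IH _ rfl)
      intro j
      by_cases hj0 : j.val = 0
      · rw [if_pos hj0, show j = z from Fin.ext hj0]; exact hc
      by_cases hjr : j.val < r
      · rw [if_neg hj0, if_pos hjr]; exact vlow j hj0 hjr
      · rw [if_neg hj0, if_neg hjr]
        exact congrArg Fin.val (fixhigh (j.val - r) j (by omega))
    · right; right
      have movedhigh : ∀ m : ℕ, ∀ i : Fin (r + s - 1),
          i.val + m = r + s - 2 → r ≤ i.val → σ i ≠ i := by
        intro m
        induction m with
        | zero =>
          intro i hiv _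
          have hi : i = σ z := Fin.ext (by rw [hc]; omega)
          rw [hi]; exact hmove z hz
        | succ m IH =>
          intro i hiv hri
          have hjlt : i.val + 1 < r + s - 1 := by omega
          have hjm : σ ⟨i.val + 1, hjlt⟩ ≠ ⟨i.val + 1, hjlt⟩ :=
            IH _ (by simp; omega) (by simp; omega)
          have hjv := h1 ⟨i.val + 1, hjlt⟩ hjm (by simp) (by simp; omega)
          have he : σ ⟨i.val + 1, hjlt⟩ = i := Fin.ext (by simp at hjv ⊢; omega)
          have := hmove _ hjm
          rw [he] at this
          exact this
      have hrlt : r < r + s - 1 := by omega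
      have movedr : σ ⟨r, hrlt⟩ ≠ ⟨r, hrlt⟩ := movedhigh (s - 2) _ (by simp; omega) (by simp)
      have hσr0 : (σ ⟨r, hrlt⟩).val = 0 := h2 _ movedr rfl
      have fixlow : ∀ m : ℕ, ∀ i : Fin (r + s - 1), i.val = 1 + m → i.val < r → σ i = i := by
        intro m
        induction m with
        | zero =>
          intro i hiv hir
          by_contra hm
          have hv := h1 i hm (by omega) (by omega)
          have e1 : σ i = z := Fin.ext (by simp [hzdef]; omega)
          have e2 : σ ⟨r, hrlt⟩ = z := Fin.ext hσr0
          have := congrArg Fin.val (σ.injective (e1.trans e2.symm))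
          simp at this
          omega
        | succ m IH =>
          intro i hiv hir
          by_contra hm
          have hv := h1 i hm (by omega) (by omega)
          have hprev : σ i = ⟨1 + m, by omega⟩ := Fin.ext (by simp; omega)
          have := hmove i hm
          rw [hprev] at this
          exact this (IH _ rfl (by simp; omega))
      have vhigh : ∀ i : Fin (r + s - 1), r < i.val → (σ i).val = i.val - 1 := by
        intro i hri
        have hi := i.isLt
        have hm : σ i ≠ i := movedhigh (r + s - 2 - i.val) i (by omega) (by omega)
        have := h1 i hm (by omega) (by omega)
        omega
      intro j
      have hj := j.isLt
      by_cases hj0 : j.val = 0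
      · rw [if_pos hj0, show j = z from Fin.ext hj0]; exact hc
      by_cases hjr : j.val < r
      · rw [if_neg hj0, if_pos hjr]
        exact congrArg Fin.val (fixlow (j.val - 1) j (by omega) hjr)
      by_cases hjr' : j.val = r
      · rw [if_neg hj0, if_neg hjr, if_pos hjr']
        rw [show j = ⟨r, hrlt⟩ from Fin.ext hjr']
        exact hσr0
      · rw [if_neg hj0, if_neg hjr, if_neg hjr']
        exact vhigh j (by omega)

lemma smul_term (a b c : ℕ) (h : Odd (a + b)) :
    ((-1 : ℤˣ) ^ a) • ((-1 : ℝ[X]) ^ b * X ^ c) = -X ^ c := by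
  have h1 : (((-1 : ℤˣ) ^ a : ℤˣ) : ℤ) = (-1) ^ a := by push_cast; ring
  rw [Units.smul_def, zsmul_eq_mul, h1]
  push_cast
  rw [← mul_assoc, ← pow_add, h.neg_one_pow]
  ring

lemma prod_split {n r : ℕ} (h : r ≤ n) (f : ℕ → ℝ[X]) :
    ∏ i : Fin n, f i.val = (∏ t ∈ Finset.Ico 0 r, f t) * ∏ t ∈ Finset.Ico r n, f t := by
  rw [Fin.prod_univ_eq_prod_range, Finset.range_eq_Ico,
    ← Finset.prod_Ico_consecutive _ (Nat.zero_le r) h]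

lemma prod_split3 {n r : ℕ} (h1 : 1 ≤ r) (h : r ≤ n) (f : ℕ → ℝ[X]) :
    ∏ i : Fin n, f i.val =
      ((∏ t ∈ Finset.Ico 0 1, f t) * ∏ t ∈ Finset.Ico 1 r, f t) * ∏ t ∈ Finset.Ico r n, f t := by
  rw [prod_split h f, ← Finset.prod_Ico_consecutive f (Nat.zero_le 1) h1]

lemma prod_constOn {a b : ℕ} (f : ℕ → ℝ[X]) (c : ℝ[X]) (h : ∀ t, a ≤ t → t < b → f t = c) :
    ∏ t ∈ Finset.Ico a b, f t = c ^ (b - a) := by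
  have : ∏ t ∈ Finset.Ico a b, f t = ∏ _t ∈ Finset.Ico a b, c :=
    Finset.prod_congr rfl (fun t ht => by rw [Finset.mem_Ico] at ht; exact h t ht.1 ht.2)
  rw [this, Finset.prod_const, Nat.card_Ico]

end Aux

theorem stmt10 (r s : ℕ) (hr : 2 ≤ r) (hs : 2 ≤ s) :
    (adjMat (inftyAdj r s)).charpoly =
      X ^ (r + s - 1) - X ^ (s - 1) - X ^ (r - 1) := by
  classical
  set M := charmatrix (adjMat (inftyAdj r s)) with hMdef
  -- entry lemmas
  have hdiag : ∀ i, M i i = X := by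
    intro i
    have hni : ¬ inftyAdj r s i i := by
      have := i.isLt
      rintro (⟨e1, e2⟩ | ⟨e1, e2⟩ | ⟨e1, e2⟩ | ⟨e1, e2, e3⟩ | ⟨e1, e2⟩) <;> omega
    rw [hMdef, charmatrix_apply_eq]
    simp [adjMat, hni]
  have hOff : ∀ i j, i ≠ j → inftyAdj r s i j → M i j = -1 := by
    intro i j hne hadj
    rw [hMdef, charmatrix_apply_ne _ _ _ hne]
    simp [adjMat, hadj]
  have hZero : ∀ i j, i ≠ j → ¬ inftyAdj r s i j → M i j = 0 := by
    intro i j hne hadj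
    rw [hMdef, charmatrix_apply_ne _ _ _ hne]
    simp [adjMat, hadj]
  set σr : Equiv.Perm (Fin (r + s - 1)) :=
    (Fin.cycleRange (⟨r - 1, by omega⟩ : Fin (r + s - 1)))⁻¹ with hσrdef
  set σs : Equiv.Perm (Fin (r + s - 1)) :=
    (Fin.cycleRange (⟨r - 1, by omega⟩ : Fin (r + s - 1))) *
      (Fin.cycleRange (⟨r + s - 2, by omega⟩ : Fin (r + s - 1)))⁻¹ with hσsdef
  have hvr : ∀ j : Fin (r + s - 1), (σr j).val =
      if j.val = 0 then r - 1 else if j.val < r then j.val - 1 else j.val := by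
    intro j; rw [hσrdef]; exact valSigmaR r s hr hs j
  have hvs : ∀ j : Fin (r + s - 1), (σs j).val =
      if j.val = 0 then r + s - 2 else if j.val < r then j.val
        else if j.val = r then 0 else j.val - 1 := by
    intro j; rw [hσsdef]; exact valSigmaS r s hr hs j
  -- vanishing of other terms
  have hzero : ∀ σ : Equiv.Perm (Fin (r + s - 1)),
      σ ∉ ({1, σr, σs} : Finset (Equiv.Perm (Fin (r + s - 1)))) →
      Equiv.Perm.sign σ • ∏ i, M (σ i) i = 0 := by
    intro σ hmem
    by_cases hp : ∏ i, M (σ i) i = 0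
    · rw [hp, smul_zero]
    exfalso
    have hfac := Finset.prod_ne_zero_iff.mp hp
    have hadj : ∀ i, σ i = i ∨ inftyAdj r s (σ i) i := by
      intro i
      by_cases he : σ i = i
      · exact Or.inl he
      · refine Or.inr (by_contra fun hno => ?_)
        exact hfac i (Finset.mem_univ i) (hZero _ _ he hno)
    rcases classify r s hr hs σ hadj with h1 | h1 | h1
    · exact hmem (by simp [h1])
    · have : σ = σr := Equiv.ext fun j => Fin.ext (by rw [h1 j, hvr j])
      exact hmem (by simp [this])
    · have : σ = σs := Equiv.ext fun j => Fin.ext (by rw [h1 j, hvs j])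
      exact hmem (by simp [this])
  have hdet : M.det = ∑ σ ∈ ({1, σr, σs} : Finset (Equiv.Perm (Fin (r + s - 1)))),
      Equiv.Perm.sign σ • ∏ i, M (σ i) i := by
    rw [Matrix.det_apply]
    exact (Finset.sum_subset (Finset.subset_univ _) (fun x _ hx => hzero x hx)).symm
  -- distinctness
  have hN : 0 < r + s - 1 := by omega
  have hvr0 : (σr ⟨0, hN⟩).val = r - 1 := by rw [hvr]; simp
  have hvs0 : (σs ⟨0, hN⟩).val = r + s - 2 := by rw [hvs]; simp
  have ne1r : (1 : Equiv.Perm (Fin (r + s - 1))) ≠ σr := by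
    intro he
    rw [← he] at hvr0
    simp at hvr0
    omega
  have ne1s : (1 : Equiv.Perm (Fin (r + s - 1))) ≠ σs := by
    intro he
    rw [← he] at hvs0
    simp at hvs0
    omega
  have ners : σr ≠ σs := by
    intro he
    rw [← he] at hvs0
    omega
  -- term values
  have hT1 : Equiv.Perm.sign (1 : Equiv.Perm (Fin (r + s - 1))) •
      ∏ i, M ((1 : Equiv.Perm (Fin (r + s - 1))) i) i = X ^ (r + s - 1) := by
    have : ∏ i, M ((1 : Equiv.Perm (Fin (r + s - 1))) i) i = ∏ _i : Fin (r + s - 1), (X : ℝ[X]) :=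
      Finset.prod_congr rfl fun i _ => by rw [Equiv.Perm.one_apply, hdiag]
    rw [this, Finset.prod_const, Finset.card_univ, Fintype.card_fin, _root_.map_one, one_smul]
  have hMr : ∀ i : Fin (r + s - 1), M (σr i) i =
      (fun t => if t < r then (-1 : ℝ[X]) else X) i.val := by
    intro i
    have hi := i.isLt
    have hv := hvr i
    simp only []
    by_cases hi0 : i.val = 0
    · rw [if_pos hi0] at hv
      rw [if_pos (by omega)]
      refine hOff _ _ (fun he => by rw [he] at hv; omega) ?_
      exact Or.inr (Or.inl ⟨hv, hi0⟩)
    by_cases hir : i.val < r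
    · rw [if_neg hi0, if_pos hir] at hv
      rw [if_pos hir]
      refine hOff _ _ (fun he => by rw [he] at hv; omega) ?_
      exact Or.inl ⟨by omega, by omega⟩
    · rw [if_neg hi0, if_neg hir] at hv
      rw [if_neg hir, show σr i = i from Fin.ext hv]
      exact hdiag i
  have hTr : Equiv.Perm.sign σr • ∏ i, M (σr i) i = -X ^ (s - 1) := by
    have hprod : ∏ i, M (σr i) i = (-1 : ℝ[X]) ^ r * X ^ (s - 1) := by
      rw [Finset.prod_congr rfl fun i _ => hMr i,
        prod_split (show r ≤ r + s - 1 by omega) (fun t => if t < r then (-1 : ℝ[X]) else X),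
        prod_constOn _ (-1 : ℝ[X]) (fun t _ ht => if_pos ht),
        prod_constOn _ (X : ℝ[X]) (fun t ht _ => if_neg (by omega))]
      rw [Nat.sub_zero, show r + s - 1 - r = s - 1 by omega]
    have hsign : Equiv.Perm.sign σr = (-1 : ℤˣ) ^ (r - 1) := by
      rw [hσrdef, Equiv.Perm.sign_inv, Fin.sign_cycleRange]
    rw [hprod, hsign, smul_term _ _ _ ⟨r - 1, by omega⟩]
  have hMs : ∀ i : Fin (r + s - 1), M (σs i) i =
      (fun t => if t = 0 then (-1 : ℝ[X]) else if t < r then X else -1) i.val := by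
    intro i
    have hi := i.isLt
    have hv := hvs i
    simp only []
    by_cases hi0 : i.val = 0
    · rw [if_pos hi0] at hv
      rw [if_pos hi0]
      refine hOff _ _ (fun he => by rw [he] at hv; omega) ?_
      exact Or.inr (Or.inr (Or.inr (Or.inr ⟨hv, hi0⟩)))
    by_cases hir : i.val < r
    · rw [if_neg hi0, if_pos hir] at hv
      rw [if_neg hi0, if_pos hir, show σs i = i from Fin.ext hv]
      exact hdiag i
    by_cases hirr : i.val = r
    · rw [if_neg hi0, if_neg hir, if_pos hirr] at hv
      rw [if_neg hi0, if_neg hir]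
      refine hOff _ _ (fun he => by rw [he] at hv; omega) ?_
      exact Or.inr (Or.inr (Or.inl ⟨hv, hirr⟩))
    · rw [if_neg hi0, if_neg hir, if_neg hirr] at hv
      rw [if_neg hi0, if_neg hir]
      refine hOff _ _ (fun he => by rw [he] at hv; omega) ?_
      exact Or.inr (Or.inr (Or.inr (Or.inl ⟨by omega, by omega, by omega⟩)))
  have hTs : Equiv.Perm.sign σs • ∏ i, M (σs i) i = -X ^ (r - 1) := by
    have hprod : ∏ i, M (σs i) i = (-1 : ℝ[X]) ^ s * X ^ (r - 1) := by
      rw [Finset.prod_congr rfl fun i _ => hMs i,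
        prod_split3 (show 1 ≤ r by omega) (show r ≤ r + s - 1 by omega)
          (fun t => if t = 0 then (-1 : ℝ[X]) else if t < r then X else -1),
        prod_constOn _ (-1 : ℝ[X]) (fun t h1 h2 => if_pos (by omega)),
        prod_constOn _ (X : ℝ[X]) (fun t h1 h2 => by
          rw [if_neg (by omega), if_pos h2]),
        prod_constOn _ (-1 : ℝ[X]) (fun t h1 h2 => by
          rw [if_neg (by omega), if_neg (by omega)])]
      rw [show r + s - 1 - r = s - 1 by omega, Nat.sub_zero]
      rw [show ((-1 : ℝ[X]) ^ 1 * X ^ (r - 1)) * (-1) ^ (s - 1)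
          = ((-1 : ℝ[X]) ^ 1 * (-1) ^ (s - 1)) * X ^ (r - 1) by ring,
        ← pow_add, show 1 + (s - 1) = s by omega]
    have hsign : Equiv.Perm.sign σs = (-1 : ℤˣ) ^ ((r - 1) + (r + s - 2)) := by
      rw [hσsdef, _root_.map_mul, Equiv.Perm.sign_inv, Fin.sign_cycleRange, Fin.sign_cycleRange,
        ← pow_add]
    rw [hprod, hsign, smul_term _ _ _ ⟨r + s - 2, by omega⟩]
  -- assemble
  show M.det = _
  rw [hdet, Finset.sum_insert (by simp [ne1r, ne1s]),
    Finset.sum_insert (by simp [ners]), Finset.sum_singleton, hT1, hTr, hTs]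
  ring
end

section
/- For all integers a, c ≥ 0 and b ≥ 1, the characteristic polynomial of the adjacency matrix of the digraph θ(a,b,c) equals X^n − X^b − X^a, where n = a + b + c + 2. -/
open Matrix Polynomial

/-- Arc relation of the digraph `θ(a,b,c)` on `a+b+c+2` vertices: `u = 0`, `v = a+1`,
a directed path from `u` to `v` through the `a` internal vertices `1, …, a`,
a directed path from `u` to `v` through the `b` internal vertices `a+2, …, a+b+1`,
and a directed path from `v` to `u` through the `c` internal vertices `a+b+2, …, a+b+c+1`. -/
def thetaAdj (a b c : ℕ) : Fin (a + b + c + 2) → Fin (a + b + c + 2) → Prop := fun i j =>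
  (j.val = i.val + 1 ∧ i.val ≤ a) ∨
  (i.val = 0 ∧ j.val = a + 2) ∨
  (j.val = i.val + 1 ∧ a + 2 ≤ i.val ∧ i.val ≤ a + b) ∨
  (i.val = a + b + 1 ∧ j.val = a + 1) ∨
  (c = 0 ∧ i.val = a + 1 ∧ j.val = 0) ∨
  (0 < c ∧ i.val = a + 1 ∧ j.val = a + b + 2) ∨
  (j.val = i.val + 1 ∧ a + b + 2 ≤ i.val ∧ i.val ≤ a + b + c) ∨
  (0 < c ∧ i.val = a + b + c + 1 ∧ j.val = 0)


open Matrix Polynomial Equiv Finset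

section Cyc
variable {m L : ℕ} {p : ℕ → ℕ}

/-- membership in the cycle described by `p` on `[0, L)`. -/
def onCyc (L : ℕ) (p : ℕ → ℕ) (x : Fin m) : Prop := ∃ k, k < L ∧ p k = x.val

noncomputable def cycEquiv (hlt : ∀ k, p k < m)
    (hinj : ∀ k l, k < L → l < L → p k = p l → k = l) :
    Fin L ≃ {x : Fin m // onCyc L p x} :=
  Equiv.ofBijective (fun k => ⟨⟨p k.val, hlt k.val⟩, k.val, k.isLt, rfl⟩)
    ⟨fun k l h => Fin.ext (hinj _ _ k.isLt l.isLt (by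
        simpa using congrArg (fun y => y.1.1) h)),
     fun x => by
        obtain ⟨k, hk, he⟩ := x.2
        exact ⟨⟨k, hk⟩, Subtype.ext (Fin.ext he)⟩⟩

open scoped Classical in
noncomputable def cycPerm (hL : L ≠ 0) (hlt : ∀ k, p k < m)
    (hinj : ∀ k l, k < L → l < L → p k = p l → k = l) :
    Equiv.Perm (Fin m) :=
  (finRotate L).extendDomain (cycEquiv hlt hinj)

theorem cycPerm_apply (hL : L ≠ 0) (hlt : ∀ k, p k < m)
    (hinj : ∀ k l, k < L → l < L → p k = p l → k = l) (k : ℕ) (hk : k < L) :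
    cycPerm hL hlt hinj ⟨p k, hlt k⟩ = ⟨p ((k + 1) % L), hlt _⟩ := by
  obtain ⟨L', rfl⟩ := Nat.exists_eq_succ_of_ne_zero hL
  have h1 : (⟨p k, hlt k⟩ : Fin m) = ((cycEquiv hlt hinj ⟨k, hk⟩ : {x : Fin m // _}) : Fin m) := rfl
  rw [h1, cycPerm, Equiv.Perm.extendDomain_apply_image]
  apply Fin.ext
  show p (((finRotate (L' + 1)) ⟨k, hk⟩ : Fin (L' + 1)).val) = p ((k + 1) % (L' + 1))
  congr 1
  rw [finRotate_succ_apply]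
  simp [Fin.add_def]

open scoped Classical in
theorem cycPerm_fix (hL : L ≠ 0) (hlt : ∀ k, p k < m)
    (hinj : ∀ k l, k < L → l < L → p k = p l → k = l) (x : Fin m) (hx : ¬ onCyc L p x) :
    cycPerm hL hlt hinj x = x :=
  Equiv.Perm.extendDomain_apply_not_subtype _ _ hx

theorem cycPerm_sign (hL : L ≠ 0) (hlt : ∀ k, p k < m)
    (hinj : ∀ k l, k < L → l < L → p k = p l → k = l) :
    Equiv.Perm.sign (cycPerm hL hlt hinj) = (-1) ^ (L - 1) := by
  obtain ⟨L', rfl⟩ := Nat.exists_eq_succ_of_ne_zero hL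
  rw [cycPerm, Equiv.Perm.sign_extendDomain, sign_finRotate]

open scoped Classical in
theorem cycCard (hL : L ≠ 0) (hlt : ∀ k, p k < m)
    (hinj : ∀ k l, k < L → l < L → p k = p l → k = l) :
    Fintype.card {x : Fin m // onCyc L p x} = L := by
  have := Fintype.card_congr (cycEquiv hlt hinj)
  rw [Fintype.card_fin] at this
  exact this.symm

open Matrix Polynomial Equiv Finset

section Theta
variable {a b c : ℕ}

theorem theta_no_loop (hb : 1 ≤ b) {i j : Fin (a+b+c+2)} (h : thetaAdj a b c i j) : i ≠ j := by
  have hi := i.isLt; have hj := j.isLt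
  intro he; subst he
  simp only [thetaAdj] at h; omega

theorem theta_out_unique (hb : 1 ≤ b) {i j j' : Fin (a+b+c+2)} (hi : i.val ≠ 0)
    (h : thetaAdj a b c i j) (h' : thetaAdj a b c i j') : j = j' := by
  have h1 := j.isLt; have h2 := j'.isLt; have h3 := i.isLt
  simp only [thetaAdj] at h h'
  exact Fin.ext (by omega)

theorem theta_from_zero {j : Fin (a+b+c+2)} (h : thetaAdj a b c 0 j) :
    j.val = 1 ∨ j.val = a + 2 := by
  have h1 := j.isLt
  simp only [thetaAdj, Fin.val_zero] at h
  omega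

/-- the cycle through the `a`-path and the `c`-path, as positions. -/
def P1 (a b c : ℕ) : ℕ → ℕ := fun k =>
  if k ≤ a + 1 then k else if k ≤ a + c + 1 then k + b else 0

/-- the cycle through the `b`-path and the `c`-path, as positions. -/
def P2 (a b c : ℕ) : ℕ → ℕ := fun k =>
  if k = 0 then 0 else if k ≤ b then a + 1 + k
  else if k = b + 1 then a + 1 else if k ≤ b + c + 1 then a + k else 0

theorem P1_lt : ∀ k, P1 a b c k < a + b + c + 2 := by
  intro k; simp only [P1]; split_ifs <;> first | omega | (exfalso; assumption)

theorem P2_lt : ∀ k, P2 a b c k < a + b + c + 2 := by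
  intro k; simp only [P2]; split_ifs <;> first | omega | (exfalso; assumption)

theorem P1_inj : ∀ k l, k < a + c + 2 → l < a + c + 2 → P1 a b c k = P1 a b c l → k = l := by
  intro k l hk hl h; simp only [P1] at h; split_ifs at h <;> omega

theorem P2_inj (hb : 1 ≤ b) :
    ∀ k l, k < b + c + 2 → l < b + c + 2 → P2 a b c k = P2 a b c l → k = l := by
  intro k l hk hl h; simp only [P2] at h; split_ifs at h <;> omega

theorem P1_arc (hb : 1 ≤ b) (k : ℕ) (hk : k ≤ a + c + 1) :
    thetaAdj a b c ⟨P1 a b c k, P1_lt k⟩ ⟨P1 a b c (k+1), P1_lt (k+1)⟩ := by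
  simp only [thetaAdj, P1]
  split_ifs <;> first | omega | (exfalso; assumption)

theorem P2_arc (hb : 1 ≤ b) (k : ℕ) (hk : k ≤ b + c + 1) (hk0 : 1 ≤ k) :
    thetaAdj a b c ⟨P2 a b c k, P2_lt k⟩ ⟨P2 a b c (k+1), P2_lt (k+1)⟩ := by
  simp only [thetaAdj, P2]
  split_ifs <;> first | omega | (exfalso; assumption)

/-- rank function decreasing along reversed arcs (for arcs not into 0). -/
def Rnk (a b : ℕ) : ℕ → ℕ := fun i =>
  if i = 0 then 0 else if i ≤ a then i else if i = a + 1 then a + b + 2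
  else if i ≤ a + b + 1 then i - a - 1 else i + 7

theorem Rnk_lt (hb : 1 ≤ b) {i j : Fin (a+b+c+2)} (h : thetaAdj a b c i j)
    (hj : j.val ≠ 0) : Rnk a b i.val < Rnk a b j.val := by
  have h1 := i.isLt; have h2 := j.isLt
  simp only [thetaAdj] at h
  simp only [Rnk]
  split_ifs <;> first | omega | (exfalso; assumption)

theorem Rnk_zero {i : ℕ} (h : Rnk a b i = 0) : i = 0 := by
  by_contra hne
  simp only [Rnk] at h
  split_ifs at h <;> omega
end Theta

noncomputable def theta1 (a b c : ℕ) : Equiv.Perm (Fin (a+b+c+2)) :=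
  cycPerm (L := a+c+2) (p := P1 a b c) (by omega) P1_lt P1_inj

noncomputable def theta2 (a b c : ℕ) (hb : 1 ≤ b) : Equiv.Perm (Fin (a+b+c+2)) :=
  cycPerm (L := b+c+2) (p := P2 a b c) (by omega) P2_lt (P2_inj hb)

theorem classify_s11 (a b c : ℕ) (hb : 1 ≤ b) (σ : Equiv.Perm (Fin (a+b+c+2)))
    (H : ∀ i, σ i = i ∨ thetaAdj a b c i (σ i)) :
    σ = 1 ∨ σ = theta1 a b c ∨ σ = theta2 a b c hb := by
  rcases H 0 with h0 | h0
  · -- identity case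
    left
    have key : ∀ r : ℕ, ∀ i : Fin (a+b+c+2), Rnk a b i.val ≤ r → σ i = i := by
      intro r
      induction r with
      | zero =>
        intro i hi
        have hv : i.val = 0 := Rnk_zero (Nat.le_zero.mp hi)
        have hi0 : i = 0 := Fin.ext (by simpa using hv)
        rw [hi0]; exact h0
      | succ r ih =>
        intro i hi
        set k := σ.symm i with hk
        have hki : σ k = i := Equiv.apply_symm_apply σ i
        by_cases hknei : k = i
        · exact hknei ▸ hki
        rcases H k with h | h
        · exact absurd (h.symm.trans hki) hknei
        rw [hki] at h
        have hnz : i.val ≠ 0 := by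
          intro hz
          have hi0 : i = 0 := Fin.ext (by simpa using hz)
          have hs : σ.symm (0 : Fin (a+b+c+2)) = 0 := by
            conv_lhs => rw [← h0]
            exact σ.symm_apply_apply 0
          exact hknei (by rw [hk, hi0]; exact hs)
        have hlt := Rnk_lt hb h hnz
        have := ih k (by omega)
        exact absurd (this.symm.trans hki) hknei
    exact Equiv.ext fun i => by rw [key (Rnk a b i.val) i le_rfl, Equiv.Perm.one_apply]
  rcases theta_from_zero h0 with h1 | h1
  · -- theta1 case
    right; left
    have chain : ∀ k : ℕ, k ≤ a+c+1 →
        σ ⟨P1 a b c k, P1_lt k⟩ = ⟨P1 a b c (k+1), P1_lt _⟩ := by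
      intro k
      induction k with
      | zero =>
        intro _
        have e0 : (⟨P1 a b c 0, P1_lt 0⟩ : Fin (a+b+c+2)) = 0 := by
          apply Fin.ext
          show P1 a b c 0 = 0
          simp only [P1]; split_ifs <;> first | omega | (exfalso; assumption)
        rw [e0]
        apply Fin.ext
        rw [h1]
        show (1:ℕ) = P1 a b c 1
        simp only [P1]; split_ifs <;> first | omega | (exfalso; assumption)
      | succ k ih =>
        intro hk1
        have ihh := ih (by omega)
        have hne : σ ⟨P1 a b c (k+1), P1_lt _⟩ ≠ ⟨P1 a b c (k+1), P1_lt _⟩ := by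
          intro he
          have heq : (⟨P1 a b c k, P1_lt k⟩ : Fin _) = ⟨P1 a b c (k+1), P1_lt _⟩ :=
            σ.injective (by rw [ihh, he])
          have := P1_inj k (k+1) (by omega) (by omega) (congrArg Fin.val heq)
          omega
        rcases H ⟨P1 a b c (k+1), P1_lt _⟩ with h | h
        · exact absurd h hne
        · have harc2 := P1_arc hb (k+1) hk1
          have hnz : (⟨P1 a b c (k+1), P1_lt _⟩ : Fin (a+b+c+2)).val ≠ 0 := by
            show P1 a b c (k+1) ≠ 0
            simp only [P1]; split_ifs <;> first | omega | (exfalso; assumption)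
          exact theta_out_unique hb hnz h harc2
    have fixedB : ∀ m : ℕ, ∀ i : Fin (a+b+c+2), i.val ≤ m →
        a+2 ≤ i.val → i.val ≤ a+b+1 → σ i = i := by
      intro m
      induction m with
      | zero => intro i hm h2 h3; omega
      | succ m ih =>
        intro i hm h2 h3
        set k := σ.symm i with hk
        have hki : σ k = i := Equiv.apply_symm_apply σ i
        by_cases hknei : k = i
        · exact hknei ▸ hki
        rcases H k with h | h
        · exact absurd (h.symm.trans hki) hknei
        rw [hki] at h
        have hkb := k.isLt
        have hcase : (k.val = 0 ∧ i.val = a+2) ∨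
            (k.val = i.val - 1 ∧ a+3 ≤ i.val ∧ a+2 ≤ k.val) := by
          simp only [thetaAdj] at h; omega
        rcases hcase with ⟨hk0, hia⟩ | ⟨hkv, hia, hka⟩
        · have hkz : k = 0 := Fin.ext (by simpa using hk0)
          rw [hkz] at hki
          have : (σ 0).val = i.val := congrArg Fin.val hki
          omega
        · have := ih k (by omega) (by omega) (by omega)
          exact absurd (this.symm.trans hki) hknei
    apply Equiv.ext
    intro x
    by_cases hq : onCyc (a+c+2) (P1 a b c) x
    · obtain ⟨k, hkL, hpk⟩ := hq
      have hx : x = ⟨P1 a b c k, P1_lt k⟩ := Fin.ext hpk.symm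
      rw [hx, chain k (by omega), theta1, cycPerm_apply _ _ _ k hkL]
      apply Fin.ext
      show P1 a b c (k+1) = P1 a b c ((k+1) % (a+c+2))
      rcases (by
          rcases Nat.lt_or_ge (k+1) (a+c+2) with h | h
          · exact Or.inl (Nat.mod_eq_of_lt h)
          · have he : k+1 = a+c+2 := by omega
            exact Or.inr ⟨by rw [he, Nat.mod_self], he⟩ :
          (k+1) % (a+c+2) = k+1 ∨
          ((k+1) % (a+c+2) = 0 ∧ k+1 = a+c+2)) with h | ⟨h, h'⟩
      · rw [h]
      · rw [h, h']; simp only [P1]; split_ifs <;> first | omega | (exfalso; assumption)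
    · have hrange : a+2 ≤ x.val ∧ x.val ≤ a+b+1 := by
        by_contra hcon
        apply hq
        have hxb := x.isLt
        rcases (by omega : x.val ≤ a+1 ∨ a+b+2 ≤ x.val) with h | h
        · exact ⟨x.val, by omega, by simp only [P1]; split_ifs <;> first | omega | (exfalso; assumption)⟩
        · exact ⟨x.val - b, by omega, by simp only [P1]; split_ifs <;> first | omega | (exfalso; assumption)⟩
      rw [fixedB x.val x le_rfl hrange.1 hrange.2, theta1, cycPerm_fix _ _ _ x hq]
  · -- theta2 case
    right; right
    have chain : ∀ k : ℕ, k ≤ b+c+1 →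
        σ ⟨P2 a b c k, P2_lt k⟩ = ⟨P2 a b c (k+1), P2_lt _⟩ := by
      intro k
      induction k with
      | zero =>
        intro _
        have e0 : (⟨P2 a b c 0, P2_lt 0⟩ : Fin (a+b+c+2)) = 0 := by
          apply Fin.ext
          show P2 a b c 0 = 0
          simp only [P2]; split_ifs <;> first | omega | (exfalso; assumption)
        rw [e0]
        apply Fin.ext
        rw [h1]
        show (a+2:ℕ) = P2 a b c 1
        simp only [P2]; split_ifs <;> first | omega | (exfalso; assumption)
      | succ k ih =>
        intro hk1
        have ihh := ih (by omega)
        have hne : σ ⟨P2 a b c (k+1), P2_lt _⟩ ≠ ⟨P2 a b c (k+1), P2_lt _⟩ := by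
          intro he
          have heq : (⟨P2 a b c k, P2_lt k⟩ : Fin _) = ⟨P2 a b c (k+1), P2_lt _⟩ :=
            σ.injective (by rw [ihh, he])
          have := P2_inj hb k (k+1) (by omega) (by omega) (congrArg Fin.val heq)
          omega
        rcases H ⟨P2 a b c (k+1), P2_lt _⟩ with h | h
        · exact absurd h hne
        · have harc2 := P2_arc (a := a) hb (k+1) hk1 (by omega)
          have hnz : (⟨P2 a b c (k+1), P2_lt _⟩ : Fin (a+b+c+2)).val ≠ 0 := by
            show P2 a b c (k+1) ≠ 0
            simp only [P2]; split_ifs <;> first | omega | (exfalso; assumption)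
          exact theta_out_unique hb hnz h harc2
    have fixedA : ∀ m : ℕ, ∀ i : Fin (a+b+c+2), i.val ≤ m →
        1 ≤ i.val → i.val ≤ a → σ i = i := by
      intro m
      induction m with
      | zero => intro i hm h2 h3; omega
      | succ m ih =>
        intro i hm h2 h3
        set k := σ.symm i with hk
        have hki : σ k = i := Equiv.apply_symm_apply σ i
        by_cases hknei : k = i
        · exact hknei ▸ hki
        rcases H k with h | h
        · exact absurd (h.symm.trans hki) hknei
        rw [hki] at h
        have hkb := k.isLt
        have hcase : (k.val = 0 ∧ i.val = 1) ∨
            (k.val = i.val - 1 ∧ 2 ≤ i.val ∧ 1 ≤ k.val ∧ k.val ≤ a) := by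
          simp only [thetaAdj] at h; omega
        rcases hcase with ⟨hk0, hia⟩ | ⟨hkv, hia, hka, hka'⟩
        · have hkz : k = 0 := Fin.ext (by simpa using hk0)
          rw [hkz] at hki
          have : (σ 0).val = i.val := congrArg Fin.val hki
          omega
        · have := ih k (by omega) (by omega) (by omega)
          exact absurd (this.symm.trans hki) hknei
    apply Equiv.ext
    intro x
    by_cases hq : onCyc (b+c+2) (P2 a b c) x
    · obtain ⟨k, hkL, hpk⟩ := hq
      have hx : x = ⟨P2 a b c k, P2_lt k⟩ := Fin.ext hpk.symm
      rw [hx, chain k (by omega), theta2, cycPerm_apply _ _ _ k hkL]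
      apply Fin.ext
      show P2 a b c (k+1) = P2 a b c ((k+1) % (b+c+2))
      rcases (by
          rcases Nat.lt_or_ge (k+1) (b+c+2) with h | h
          · exact Or.inl (Nat.mod_eq_of_lt h)
          · have he : k+1 = b+c+2 := by omega
            exact Or.inr ⟨by rw [he, Nat.mod_self], he⟩ :
          (k+1) % (b+c+2) = k+1 ∨
          ((k+1) % (b+c+2) = 0 ∧ k+1 = b+c+2)) with h | ⟨h, h'⟩
      · rw [h]
      · rw [h, h']; simp only [P2]; split_ifs <;> first | omega | (exfalso; assumption)
    · have hrange : 1 ≤ x.val ∧ x.val ≤ a := by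
        by_contra hcon
        apply hq
        have hxb := x.isLt
        rcases (by omega : x.val = 0 ∨ (a+2 ≤ x.val ∧ x.val ≤ a+b+1) ∨ x.val = a+1 ∨
            a+b+2 ≤ x.val) with h | h | h | h
        · exact ⟨0, by omega, by simp only [P2]; split_ifs <;> first | omega | (exfalso; assumption)⟩
        · exact ⟨x.val - a - 1, by omega, by simp only [P2]; split_ifs <;> first | omega | (exfalso; assumption)⟩
        · exact ⟨b+1, by omega, by simp only [P2]; split_ifs <;> first | omega | (exfalso; assumption)⟩
        · exact ⟨x.val - a, by omega, by simp only [P2]; split_ifs <;> first | omega | (exfalso; assumption)⟩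
      rw [fixedA x.val x le_rfl hrange.1 hrange.2, theta2, cycPerm_fix _ _ _ x hq]

set_option maxHeartbeats 2000000 in
theorem stmt11 (a b c : ℕ) (hb : 1 ≤ b) :
    (adjMat (thetaAdj a b c)).charpoly =
      X ^ (a + b + c + 2) - X ^ b - X ^ a := by
  classical
  have hdiag : ∀ i, charmatrix (adjMat (thetaAdj a b c)) i i = X := by
    intro i
    rw [charmatrix_apply_eq]
    have h0 : adjMat (thetaAdj a b c) i i = 0 := by
      show (if thetaAdj a b c i i then (1:ℝ) else 0) = 0
      rw [if_neg (fun h => (theta_no_loop hb h) rfl)]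
    rw [h0, Polynomial.C_0, sub_zero]
  have harc : ∀ i j, thetaAdj a b c i j → charmatrix (adjMat (thetaAdj a b c)) i j = -1 := by
    intro i j h
    rw [charmatrix_apply_ne _ _ _ (theta_no_loop hb h)]
    have h1 : adjMat (thetaAdj a b c) i j = 1 := by
      show (if thetaAdj a b c i j then (1:ℝ) else 0) = 1
      rw [if_pos h]
    rw [h1, Polynomial.C_1]
  have hnot : ∀ i j, i ≠ j → ¬ thetaAdj a b c i j →
      charmatrix (adjMat (thetaAdj a b c)) i j = 0 := by
    intro i j hne h
    rw [charmatrix_apply_ne _ _ _ hne]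
    have h1 : adjMat (thetaAdj a b c) i j = 0 := by
      show (if thetaAdj a b c i j then (1:ℝ) else 0) = 0
      rw [if_neg h]
    rw [h1, Polynomial.C_0, neg_zero]
  rw [Matrix.charpoly, ← Matrix.det_transpose, Matrix.det_apply]
  -- values at 0 of the two cycle permutations
  have h10 : (theta1 a b c) 0 = ⟨1, by omega⟩ := by
    have h0' : (0 : Fin (a+b+c+2)) = ⟨P1 a b c 0, P1_lt 0⟩ := by
      apply Fin.ext
      show (0:ℕ) = P1 a b c 0
      simp only [P1]; split_ifs <;> first | omega | (exfalso; assumption)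
    rw [h0', theta1, cycPerm_apply (m := a+b+c+2) (L := a+c+2) (p := P1 a b c) (by omega) P1_lt P1_inj 0 (by omega)]
    apply Fin.ext
    show P1 a b c ((0+1) % (a+c+2)) = 1
    rw [Nat.mod_eq_of_lt (by omega)]
    simp only [P1]; split_ifs <;> first | omega | (exfalso; assumption)
  have h20 : (theta2 a b c hb) 0 = ⟨a+2, by omega⟩ := by
    have h0' : (0 : Fin (a+b+c+2)) = ⟨P2 a b c 0, P2_lt 0⟩ := by
      apply Fin.ext
      show (0:ℕ) = P2 a b c 0
      simp only [P2]; split_ifs <;> first | omega | (exfalso; assumption)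
    rw [h0', theta2, cycPerm_apply (m := a+b+c+2) (L := b+c+2) (p := P2 a b c) (by omega) P2_lt (P2_inj hb) 0 (by omega)]
    apply Fin.ext
    show P2 a b c ((0+1) % (b+c+2)) = a+2
    rw [Nat.mod_eq_of_lt (by omega)]
    simp only [P2]; split_ifs <;> first | omega | (exfalso; assumption)
  have hne1 : (1 : Equiv.Perm (Fin (a+b+c+2))) ≠ theta1 a b c := by
    intro he
    have h : ((1 : Equiv.Perm (Fin (a+b+c+2))) 0).val = 1 := by rw [he, h10]
    simp at h
  have hne2 : (1 : Equiv.Perm (Fin (a+b+c+2))) ≠ theta2 a b c hb := by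
    intro he
    have h : ((1 : Equiv.Perm (Fin (a+b+c+2))) 0).val = a+2 := by rw [he, h20]
    simp at h
  have hne12 : theta1 a b c ≠ theta2 a b c hb := by
    intro he
    rw [← he] at h20
    have h := h10.symm.trans h20
    have h' : (1:ℕ) = a+2 := congrArg Fin.val h
    omega
  -- all other permutations contribute 0
  have hvan : ∀ σ ∈ (Finset.univ : Finset (Equiv.Perm (Fin (a+b+c+2)))),
      σ ∉ ({1, theta1 a b c, theta2 a b c hb} : Finset (Equiv.Perm (Fin (a+b+c+2)))) →
      (Equiv.Perm.sign σ) • ∏ i, (charmatrix (adjMat (thetaAdj a b c)))ᵀ (σ i) i = 0 := by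
    intro σ _ hσ
    simp only [Finset.mem_insert, Finset.mem_singleton] at hσ
    push_neg at hσ
    have hcl : ¬ ∀ i, σ i = i ∨ thetaAdj a b c i (σ i) := by
      intro h
      rcases classify_s11 a b c hb σ h with h' | h' | h'
      · exact hσ.1 h'
      · exact hσ.2.1 h'
      · exact hσ.2.2 h'
    push_neg at hcl
    obtain ⟨i, hi1, hi2⟩ := hcl
    have hz : (charmatrix (adjMat (thetaAdj a b c)))ᵀ (σ i) i = 0 := by
      rw [Matrix.transpose_apply]
      exact hnot i (σ i) (fun hh => hi1 hh.symm) hi2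
    rw [Finset.prod_eq_zero (f := fun j => (charmatrix (adjMat (thetaAdj a b c)))ᵀ (σ j) j)
      (Finset.mem_univ i) hz, smul_zero]
  rw [← Finset.sum_subset
    (Finset.subset_univ ({1, theta1 a b c, theta2 a b c hb} :
      Finset (Equiv.Perm (Fin (a+b+c+2))))) hvan]
  rw [Finset.sum_insert (by
        simp only [Finset.mem_insert, Finset.mem_singleton]
        push_neg
        exact ⟨hne1, hne2⟩),
      Finset.sum_insert (by simpa using hne12),
      Finset.sum_singleton]
  -- the identity product
  have hprod1 : ∏ i, (charmatrix (adjMat (thetaAdj a b c)))ᵀ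
      ((1 : Equiv.Perm (Fin (a+b+c+2))) i) i = X ^ (a+b+c+2) := by
    have hfac : ∀ i ∈ (Finset.univ : Finset (Fin (a+b+c+2))),
        (charmatrix (adjMat (thetaAdj a b c)))ᵀ ((1 : Equiv.Perm (Fin (a+b+c+2))) i) i = X := by
      intro i _
      rw [Equiv.Perm.one_apply, Matrix.transpose_apply]
      exact hdiag i
    rw [Finset.prod_congr rfl hfac, Finset.prod_const, Finset.card_univ, Fintype.card_fin]
  -- generic cycle product
  have hprodC : ∀ (L : ℕ) (hL : L ≠ 0) (p : ℕ → ℕ) (hlt : ∀ k, p k < a+b+c+2)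
      (hinj : ∀ k l, k < L → l < L → p k = p l → k = l)
      (harcs : ∀ k, k < L → thetaAdj a b c ⟨p k, hlt k⟩ ⟨p ((k+1) % L), hlt _⟩),
      ∏ i, (charmatrix (adjMat (thetaAdj a b c)))ᵀ ((cycPerm hL hlt hinj) i) i
        = (-1)^L * X^(a+b+c+2-L) := by
    intro L hL p hlt hinj harcs
    rw [← Finset.prod_filter_mul_prod_filter_not Finset.univ (onCyc (m := a+b+c+2) L p)]
    have hcard : (Finset.univ.filter (onCyc (m := a+b+c+2) L p)).card = L := by
      rw [← Fintype.card_subtype]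
      exact cycCard hL hlt hinj
    have h1 : ∏ i ∈ Finset.univ.filter (onCyc (m := a+b+c+2) L p),
        (charmatrix (adjMat (thetaAdj a b c)))ᵀ ((cycPerm hL hlt hinj) i) i = (-1)^L := by
      have hfac : ∀ i ∈ Finset.univ.filter (onCyc (m := a+b+c+2) L p),
          (charmatrix (adjMat (thetaAdj a b c)))ᵀ ((cycPerm hL hlt hinj) i) i = -1 := by
        intro i hi
        obtain ⟨k, hk, hpk⟩ := (Finset.mem_filter.mp hi).2
        have hx : i = ⟨p k, hlt k⟩ := Fin.ext hpk.symm
        rw [hx, cycPerm_apply hL hlt hinj k hk, Matrix.transpose_apply]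
        exact harc _ _ (harcs k hk)
      rw [Finset.prod_congr rfl hfac, Finset.prod_const, hcard]
    have h2 : ∏ i ∈ Finset.univ.filter (fun i => ¬ onCyc (m := a+b+c+2) L p i),
        (charmatrix (adjMat (thetaAdj a b c)))ᵀ ((cycPerm hL hlt hinj) i) i
          = X^(a+b+c+2-L) := by
      have hfac : ∀ i ∈ Finset.univ.filter (fun i => ¬ onCyc (m := a+b+c+2) L p i),
          (charmatrix (adjMat (thetaAdj a b c)))ᵀ ((cycPerm hL hlt hinj) i) i = X := by
        intro i hi
        rw [cycPerm_fix hL hlt hinj i (Finset.mem_filter.mp hi).2, Matrix.transpose_apply]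
        exact hdiag i
      have hcard2 : (Finset.univ.filter (fun i => ¬ onCyc (m := a+b+c+2) L p i)).card = a+b+c+2-L := by
        have htot := Finset.card_filter_add_card_filter_not
          (s := (Finset.univ : Finset (Fin (a+b+c+2)))) (p := onCyc L p)
        rw [Finset.card_univ, Fintype.card_fin, hcard] at htot
        omega
      rw [Finset.prod_congr rfl hfac, Finset.prod_const, hcard2]
    rw [h1, h2]
  -- arcs along the two cycles (mod version)
  have harcs1 : ∀ k, k < a+c+2 → thetaAdj a b c ⟨P1 a b c k, P1_lt k⟩
      ⟨P1 a b c ((k+1) % (a+c+2)), P1_lt _⟩ := by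
    intro k hk
    have hmod : (⟨P1 a b c ((k+1) % (a+c+2)), P1_lt _⟩ : Fin (a+b+c+2))
        = ⟨P1 a b c (k+1), P1_lt _⟩ := by
      apply Fin.ext
      show P1 a b c ((k+1) % (a+c+2)) = P1 a b c (k+1)
      rcases Nat.lt_or_ge (k+1) (a+c+2) with h | h
      · rw [Nat.mod_eq_of_lt h]
      · have he : k+1 = a+c+2 := by omega
        rw [he, Nat.mod_self]
        simp only [P1]; split_ifs <;> first | omega | (exfalso; assumption)
    rw [hmod]
    exact P1_arc hb k (by omega)
  have harcs2 : ∀ k, k < b+c+2 → thetaAdj a b c ⟨P2 a b c k, P2_lt k⟩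
      ⟨P2 a b c ((k+1) % (b+c+2)), P2_lt _⟩ := by
    intro k hk
    have hmod : (⟨P2 a b c ((k+1) % (b+c+2)), P2_lt _⟩ : Fin (a+b+c+2))
        = ⟨P2 a b c (k+1), P2_lt _⟩ := by
      apply Fin.ext
      show P2 a b c ((k+1) % (b+c+2)) = P2 a b c (k+1)
      rcases Nat.lt_or_ge (k+1) (b+c+2) with h | h
      · rw [Nat.mod_eq_of_lt h]
      · have he : k+1 = b+c+2 := by omega
        rw [he, Nat.mod_self]
        simp only [P2]; split_ifs <;> first | omega | (exfalso; assumption)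
    rw [hmod]
    rcases Nat.eq_zero_or_pos k with hk0 | hk0
    · subst hk0
      have e0 : (⟨P2 a b c 0, P2_lt 0⟩ : Fin (a+b+c+2)) = ⟨0, by omega⟩ := by
        apply Fin.ext
        show P2 a b c 0 = 0
        simp only [P2]; split_ifs <;> first | omega | (exfalso; assumption)
      rw [e0]
      have e1 : (⟨P2 a b c 1, P2_lt 1⟩ : Fin (a+b+c+2)) = ⟨a+2, by omega⟩ := by
        apply Fin.ext
        show P2 a b c 1 = a+2
        simp only [P2]; split_ifs <;> first | omega | (exfalso; assumption)
      rw [e1]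
      show _ ∨ _ ∨ _ ∨ _ ∨ _ ∨ _ ∨ _ ∨ _
      right; left
      exact ⟨rfl, rfl⟩
    · exact P2_arc (a := a) hb k (by omega) hk0
  rw [theta1, theta2,
      hprodC (a+c+2) (by omega) (P1 a b c) P1_lt P1_inj harcs1,
      hprodC (b+c+2) (by omega) (P2 a b c) P2_lt (P2_inj hb) harcs2,
      hprod1, cycPerm_sign, cycPerm_sign, Equiv.Perm.sign_one, one_smul]
  have negkey : ∀ (m k : ℕ) (q : ℝ[X]), Odd (m + k) →
      ((-1:ℤˣ)^m) • ((-1:ℝ[X])^k * q) = -q := by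
    intro m k q hodd
    rw [Units.smul_def, Units.val_pow_eq_pow_val, Units.val_neg, Units.val_one, zsmul_eq_mul]
    push_cast
    rw [← mul_assoc, ← pow_add, Odd.neg_one_pow hodd]
    ring
  rw [negkey _ _ _ ⟨a+c+1, by omega⟩, negkey _ _ _ ⟨b+c+1, by omega⟩]
  have e1 : a+b+c+2-(a+c+2) = b := by omega
  have e2 : a+b+c+2-(b+c+2) = a := by omega
  rw [e1, e2]
  ring
end Cyc
end

section
/- For all integers r, s ≥ 2, the complementarity spectrum of the digraph ∞(r,s) is exactly {0, 1, ρ}, where ρ is the spectral radius of the adjacency matrix of ∞(r,s); moreover ρ > 1, so this spectrum has exactly three elements. -/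
open Matrix Polynomial

/-- Spectral radius of a real square matrix: supremum of the norms of the
complex eigenvalues of its complexification. -/
noncomputable def specRad {V : Type*} [Fintype V] [DecidableEq V] (B : Matrix V V ℝ) : ℝ :=
  sSup ((fun μ : ℂ => ‖μ‖) '' spectrum ℂ (B.map (Complex.ofReal : ℝ → ℂ)))

namespace Infty

def sig (r s : ℕ) (i : Fin (r+s-1)) : Fin (r+s-1) :=
  if h : i.val = r - 1 ∨ i.val = r + s - 2 then ⟨0, Nat.lt_of_le_of_lt (Nat.zero_le _) i.isLt⟩
  else ⟨i.val + 1, by have := i.isLt; omega⟩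

variable {r s : ℕ}

lemma sig_val (i : Fin (r+s-1)) :
    (sig r s i).val = if i.val = r - 1 ∨ i.val = r + s - 2 then 0 else i.val + 1 := by
  unfold sig; split_ifs <;> rfl

lemma adj_iff (hr : 2 ≤ r) (hs : 2 ≤ s) (i j : Fin (r+s-1)) :
    inftyAdj r s i j ↔ j = sig r s i ∨ (i.val = 0 ∧ j.val = r) := by
  have hi := i.isLt
  have hj := j.isLt
  have hsv := sig_val (r := r) (s := s) i
  rw [Fin.ext_iff]
  unfold inftyAdj
  split_ifs at hsv <;> rw [hsv] <;> omega

end Infty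

namespace Infty
variable {r s : ℕ}

lemma entry_eq (hr : 2 ≤ r) (hs : 2 ≤ s) (i j : Fin (r+s-1)) :
    adjMat (inftyAdj r s) i j =
      (if j = sig r s i then (1:ℝ) else 0) +
      (if i.val = 0 ∧ j = (⟨r, by omega⟩ : Fin (r+s-1)) then (1:ℝ) else 0) := by
  classical
  have h := adj_iff hr hs i j
  simp only [adjMat, Matrix.of_apply]
  by_cases h1 : j = sig r s i <;> by_cases h2 : i.val = 0 ∧ j = (⟨r, by omega⟩ : Fin (r+s-1))
  · exfalso
    have hsv := sig_val (r := r) (s := s) i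
    have : j.val = r := by rw [h2.2]
    rw [h1] at this
    rw [hsv] at this
    have := h2.1
    split_ifs at * <;> omega
  · rw [if_pos (h.2 (Or.inl h1)), if_pos h1, if_neg h2]; ring
  · have : i.val = 0 ∧ j.val = r := ⟨h2.1, by rw [h2.2]⟩
    rw [if_pos (h.2 (Or.inr this)), if_neg h1, if_pos h2]; ring
  · rw [if_neg, if_neg h1, if_neg h2]
    · ring
    · intro hadj
      rcases h.1 hadj with h' | h'
      · exact h1 h'
      · exact h2 ⟨h'.1, Fin.ext h'.2⟩

lemma mulVec_apply (hr : 2 ≤ r) (hs : 2 ≤ s) (x : Fin (r+s-1) → ℝ) (i : Fin (r+s-1)) :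
    (adjMat (inftyAdj r s)).mulVec x i
      = x (sig r s i) + if i.val = 0 then x ⟨r, by omega⟩ else 0 := by
  classical
  unfold Matrix.mulVec dotProduct
  simp only [entry_eq hr hs, add_mul, ite_mul, one_mul, zero_mul, Finset.sum_add_distrib]
  congr 1
  · rw [Finset.sum_ite_eq' Finset.univ (sig r s i) x]
    simp
  · by_cases hi : i.val = 0
    · simp only [hi, true_and]
      rw [Finset.sum_ite_eq' Finset.univ (⟨r, by omega⟩ : Fin (r+s-1)) x]
      simp
    · simp [hi]

end Infty

namespace Infty
variable {r s : ℕ}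

lemma entry_nonneg {V : Type*} (adj : V → V → Prop) (i j : V) : 0 ≤ adjMat adj i j := by
  simp only [adjMat, Matrix.of_apply]
  split_ifs <;> norm_num

lemma mulVec_nonneg {V : Type*} [Fintype V] (adj : V → V → Prop) {x : V → ℝ} (hx : 0 ≤ x) :
    0 ≤ (adjMat adj).mulVec x := by
  intro i
  simp only [Pi.zero_apply, Matrix.mulVec, dotProduct]
  exact Finset.sum_nonneg fun j _ => mul_nonneg (entry_nonneg adj i j) (hx j)

/-- spectrum membership iff eigenvector, for complex matrices. -/
lemma spec_iff {m : ℕ} (M : Matrix (Fin m) (Fin m) ℂ) (μ : ℂ) :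
    μ ∈ spectrum ℂ M ↔ ∃ v, v ≠ 0 ∧ M.mulVec v = μ • v := by
  rw [spectrum.mem_iff, Matrix.isUnit_iff_isUnit_det, isUnit_iff_ne_zero, not_not,
    ← Matrix.exists_mulVec_eq_zero_iff]
  have key : ∀ v : Fin m → ℂ, (algebraMap ℂ (Matrix (Fin m) (Fin m) ℂ) μ - M).mulVec v
      = μ • v - M.mulVec v := by
    intro v
    rw [Matrix.sub_mulVec, Algebra.algebraMap_eq_smul_one, Matrix.smul_mulVec,
      Matrix.one_mulVec]
  constructor
  · rintro ⟨v, hv, h⟩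
    rw [key v] at h
    exact ⟨v, hv, by linear_combination (norm := module) -h⟩
  · rintro ⟨v, hv, h⟩
    exact ⟨v, hv, by rw [key v, h, sub_self]⟩

lemma mulVec_map {m : ℕ} (M : Matrix (Fin m) (Fin m) ℝ) (v : Fin m → ℝ) :
    (M.map (Complex.ofReal : ℝ → ℂ)).mulVec (fun i => (v i : ℂ))
      = fun i => ((M.mulVec v i : ℝ) : ℂ) := by
  funext i
  simp only [Matrix.mulVec, dotProduct, Matrix.map_apply]
  push_cast
  rfl

end Infty

namespace Infty

/-- If a nonnegative matrix has a strictly positive eigenvector with eigenvalue `l > 0`,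
then `l` is the spectral radius. -/
lemma posEig_specRad {m : ℕ} (hm : 0 < m) (M : Matrix (Fin m) (Fin m) ℝ)
    (hM : ∀ i j, 0 ≤ M i j) {l : ℝ} (hl : 0 < l) {x : Fin m → ℝ}
    (hx : ∀ i, 0 < x i) (hAx : M.mulVec x = l • x) :
    sSup ((fun μ : ℂ => ‖μ‖) '' spectrum ℂ (M.map (Complex.ofReal : ℝ → ℂ))) = l := by
  set M' := M.map (Complex.ofReal : ℝ → ℂ) with hM'
  set S := (fun μ : ℂ => ‖μ‖) '' spectrum ℂ M' with hS
  have hmem : l ∈ S := by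
    refine ⟨(l : ℂ), ?_, by simp [Complex.norm_real, abs_of_pos hl]⟩
    rw [spec_iff]
    refine ⟨fun i => (x i : ℂ), ?_, ?_⟩
    · intro h
      have := congrFun h ⟨0, hm⟩
      simp only [Pi.zero_apply, Complex.ofReal_eq_zero] at this
      exact (hx ⟨0, hm⟩).ne' this
    · rw [hM', mulVec_map, hAx]
      funext i
      simp [Complex.ofReal_mul]
  have hub : ∀ y ∈ S, y ≤ l := by
    rintro y ⟨μ, hμ, rfl⟩
    obtain ⟨v, hv0, hv⟩ := (spec_iff M' μ).1 hμ
    -- pick index maximizing ‖v i‖ / x i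
    obtain ⟨i₀, -, hmax⟩ := Finset.exists_max_image Finset.univ
      (fun i => ‖v i‖ / x i) ⟨⟨0, hm⟩, Finset.mem_univ _⟩
    set c := ‖v i₀‖ / x i₀ with hc
    have hbound : ∀ j, ‖v j‖ ≤ c * x j := by
      intro j
      exact (div_le_iff₀ (hx j)).1 (hmax j (Finset.mem_univ j))
    have hvi₀ : 0 < ‖v i₀‖ := by
      by_contra h
      push_neg at h
      have h0 : ‖v i₀‖ = 0 := le_antisymm h (norm_nonneg _)
      have hc0 : c ≤ 0 := by rw [hc, h0]; simp
      apply hv0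
      funext j
      have := hbound j
      have : ‖v j‖ ≤ 0 := this.trans (mul_nonpos_of_nonpos_of_nonneg hc0 (hx j).le)
      simpa using le_antisymm this (norm_nonneg _)
    have key : ‖μ‖ * ‖v i₀‖ ≤ l * ‖v i₀‖ := by
      have h1 : ‖μ‖ * ‖v i₀‖ = ‖∑ j, M' i₀ j * v j‖ := by
        have : (M'.mulVec v) i₀ = ∑ j, M' i₀ j * v j := by
          simp [Matrix.mulVec, dotProduct]
        rw [← this, hv]; simp [norm_smul]
      rw [h1]
      have h2 : ‖∑ j, M' i₀ j * v j‖ ≤ ∑ j, M i₀ j * ‖v j‖ := by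
        refine (norm_sum_le _ _).trans ?_
        refine Finset.sum_le_sum fun j _ => ?_
        have hn : ‖M' i₀ j‖ = M i₀ j := by
          simp [hM', Matrix.map_apply, Complex.norm_real, abs_of_nonneg (hM i₀ j)]
        rw [norm_mul, hn]
      refine h2.trans ?_
      have h3 : ∑ j, M i₀ j * ‖v j‖ ≤ ∑ j, M i₀ j * (c * x j) :=
        Finset.sum_le_sum fun j _ => mul_le_mul_of_nonneg_left (hbound j) (hM i₀ j)
      refine h3.trans ?_
      have h4 : ∑ j, M i₀ j * (c * x j) = c * (M.mulVec x i₀) := by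
        simp only [Matrix.mulVec, dotProduct, Finset.mul_sum]
        exact Finset.sum_congr rfl fun j _ => by ring
      rw [h4, hAx]
      have : ‖v i₀‖ = c * x i₀ := (div_mul_cancel₀ _ (hx i₀).ne').symm
      rw [this]
      simp only [Pi.smul_apply, smul_eq_mul]
      ring_nf
      exact le_refl _
    exact le_of_mul_le_mul_right (by linarith [key]) hvi₀
  exact le_antisymm (csSup_le ⟨l, hmem⟩ hub) (le_csSup ⟨l, hub⟩ hmem)

end Infty

namespace Infty
variable {r s : ℕ}

lemma pow_shift {l : ℝ} {a b : ℕ} (h : a = b + 1) : l ^ a = l * l ^ b := by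
  subst h; rw [pow_succ]; ring

lemma exists_rho (hr : 2 ≤ r) (hs : 2 ≤ s) :
    ∃ l : ℝ, 1 < l ∧ l^(r+s-1) = l^(r-1) + l^(s-1) := by
  set f : ℝ → ℝ := fun t => t^(r+s-1) - t^(r-1) - t^(s-1) with hf
  have hcont : ContinuousOn f (Set.Icc 1 2) := by fun_prop
  have hf1 : f 1 = -1 := by simp [hf]
  have hf2 : 0 ≤ f 2 := by
    have h1 : (2:ℝ)^(r-1) ≤ 2^(r+s-2) := by
      apply pow_le_pow_right₀ (by norm_num); omega
    have h2 : (2:ℝ)^(s-1) ≤ 2^(r+s-2) := by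
      apply pow_le_pow_right₀ (by norm_num); omega
    have h3 : (2:ℝ)^(r+s-1) = 2^(r+s-2) * 2 := by
      rw [← pow_succ]; congr 1; omega
    simp only [hf]
    nlinarith
  have hsub := intermediate_value_Icc (by norm_num : (1:ℝ) ≤ 2) hcont
  have : (0:ℝ) ∈ Set.Icc (f 1) (f 2) := by
    rw [hf1]; exact ⟨by norm_num, hf2⟩
  obtain ⟨c, hc, hfc⟩ := hsub this
  refine ⟨c, ?_, ?_⟩
  · rcases lt_or_eq_of_le hc.1 with h | h
    · exact h
    · exfalso; rw [← h] at hfc; rw [hf1] at hfc; norm_num at hfc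
  · have : c^(r+s-1) - c^(r-1) - c^(s-1) = 0 := hfc
    linarith

/-- The Perron eigenvector. -/
noncomputable def xv (r s : ℕ) (l : ℝ) : Fin (r+s-1) → ℝ := fun i =>
  if i.val = 0 then l^(r+s-2) else if i.val ≤ r-1 then l^(s-2+i.val) else l^(i.val-1)

lemma xv_pos {l : ℝ} (hl : 0 < l) (i : Fin (r+s-1)) : 0 < xv r s l i := by
  unfold xv; split_ifs <;> positivity

lemma xv_eig (hr : 2 ≤ r) (hs : 2 ≤ s) {l : ℝ} (hl : 0 < l)
    (heq : l^(r+s-1) = l^(r-1) + l^(s-1)) :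
    (adjMat (inftyAdj r s)).mulVec (xv r s l) = l • xv r s l := by
  funext i
  have hi := i.isLt
  have hsv := sig_val (r := r) (s := s) i
  rw [mulVec_apply hr hs, Pi.smul_apply, smul_eq_mul]
  by_cases h0 : i.val = 0
  · have h1 : (sig r s i).val = 1 := by
      rw [hsv]; split_ifs with h <;> omega
    have e1 : xv r s l (sig r s i) = l^(s-1) := by
      unfold xv; rw [h1, if_neg (by omega), if_pos (by omega)]
      congr 1; omega
    have e2 : xv r s l ⟨r, by omega⟩ = l^(r-1) := by
      unfold xv
      rw [if_neg (by simp; omega), if_neg (by simp; omega)]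
    have e3 : xv r s l i = l^(r+s-2) := by unfold xv; rw [if_pos h0]
    rw [if_pos h0, e1, e2, e3, ← pow_shift (show r+s-1 = (r+s-2)+1 by omega), heq]; ring
  · rw [if_neg h0, add_zero]
    have hcase : i.val = r-1 ∨ i.val = r+s-2 ∨ (1 ≤ i.val ∧ i.val ≤ r-2) ∨
        (r ≤ i.val ∧ i.val ≤ r+s-3) := by omega
    rcases hcase with h | h | h | h
    · have h1 : (sig r s i).val = 0 := by rw [hsv, if_pos (Or.inl h)]
      have e1 : xv r s l (sig r s i) = l^(r+s-2) := by unfold xv; rw [h1, if_pos rfl]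
      have e2 : xv r s l i = l^(s-2+(r-1)) := by
        unfold xv; rw [if_neg (by omega), if_pos (by omega), h]
      rw [e1, e2]; exact pow_shift (by omega)
    · have h1 : (sig r s i).val = 0 := by rw [hsv, if_pos (Or.inr h)]
      have e1 : xv r s l (sig r s i) = l^(r+s-2) := by unfold xv; rw [h1, if_pos rfl]
      have e2 : xv r s l i = l^(r+s-3) := by
        unfold xv; rw [if_neg (by omega), if_neg (by omega), h]
        congr 1
      rw [e1, e2]; exact pow_shift (by omega)
    · have h1 : (sig r s i).val = i.val + 1 := by rw [hsv, if_neg (by omega)]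
      have e1 : xv r s l (sig r s i) = l^(s-2+(i.val+1)) := by
        unfold xv; rw [h1, if_neg (by omega), if_pos (by omega)]
      have e2 : xv r s l i = l^(s-2+i.val) := by
        unfold xv; rw [if_neg (by omega), if_pos (by omega)]
      rw [e1, e2]; exact pow_shift (by omega)
    · have h1 : (sig r s i).val = i.val + 1 := by rw [hsv, if_neg (by omega)]
      have e1 : xv r s l (sig r s i) = l^(i.val) := by
        unfold xv; rw [h1, if_neg (by omega), if_neg (by omega)]
        congr 1
      have e2 : xv r s l i = l^(i.val-1) := by
        unfold xv; rw [if_neg (by omega), if_neg (by omega)]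
      rw [e1, e2]; exact pow_shift (by omega)

end Infty

namespace Infty
variable {r s : ℕ}

lemma sig_eq (i : Fin (r+s-1)) (h : ¬(i.val = r-1 ∨ i.val = r+s-2)) (hb : i.val+1 < r+s-1) :
    sig r s i = ⟨i.val+1, hb⟩ := Fin.ext (by rw [sig_val, if_neg h])

lemma sig_eq0 (i : Fin (r+s-1)) (h : i.val = r-1 ∨ i.val = r+s-2) (hb : 0 < r+s-1) :
    sig r s i = ⟨0, hb⟩ := Fin.ext (by rw [sig_val, if_pos h])

lemma Pi_subset (hr : 2 ≤ r) (hs : 2 ≤ s) {lam : ℝ}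
    (h : isComplEig (adjMat (inftyAdj r s)) lam) :
    lam = 0 ∨ lam = 1 ∨ (0 < lam ∧ ∃ x : Fin (r+s-1) → ℝ, (∀ i, 0 < x i) ∧
      (adjMat (inftyAdj r s)).mulVec x = lam • x) := by
  obtain ⟨x, hx0, hxnn, hy, hsum⟩ := h
  set A := adjMat (inftyAdj r s) with hA
  have hterm : ∀ i, x i * ((A.mulVec x - lam • x) i) = 0 := by
    intro i
    have hnn : ∀ j ∈ Finset.univ, 0 ≤ x j * ((A.mulVec x - lam • x) j) :=
      fun j _ => mul_nonneg (hxnn j) (hy j)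
    exact (Finset.sum_eq_zero_iff_of_nonneg hnn).1 hsum i (Finset.mem_univ i)
  have hcomp : ∀ i, 0 < x i → A.mulVec x i = lam * x i := by
    intro i hi
    have := hterm i
    rcases mul_eq_zero.1 this with h' | h'
    · exact absurd h' hi.ne'
    · have : A.mulVec x i - lam * x i = 0 := by
        simpa [Pi.sub_apply, Pi.smul_apply, smul_eq_mul] using h'
      linarith
  have hex : ∃ i, 0 < x i := by
    by_contra hcon
    push_neg at hcon
    exact hx0 (funext fun i => le_antisymm (hcon i) (hxnn i))
  rcases le_or_gt lam 0 with hlam | hlam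
  · rcases eq_or_lt_of_le hlam with h' | h'
    · left; exact h'
    · exfalso
      obtain ⟨i, hi⟩ := hex
      have h1 : 0 ≤ A.mulVec x i := mulVec_nonneg _ hxnn i
      have h2 : A.mulVec x i = lam * x i := hcomp i hi
      nlinarith
  right
  have hstep : ∀ i : Fin (r+s-1), 0 < x i → i.val ≠ 0 → x (sig r s i) = lam * x i := by
    intro i hi h0
    have := hcomp i hi
    rw [mulVec_apply hr hs, if_neg h0, add_zero] at this
    exact this
  have hn : 0 < r+s-1 := by omega
  have hstep' : ∀ i : Fin (r+s-1), 0 < x i → i.val ≠ 0 → 0 < x (sig r s i) := by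
    intro i hi h0
    rw [hstep i hi h0]
    positivity
  -- x is positive at vertex 0
  have reach0 : 0 < x ⟨0, hn⟩ := by
    obtain ⟨i, hi⟩ := hex
    have key : ∀ k, ∀ i : Fin (r+s-1), (r+s-1) - i.val ≤ k → 0 < x i → 0 < x ⟨0, hn⟩ := by
      intro k
      induction k with
      | zero => intro i hk _; have := i.isLt; omega
      | succ k ih =>
        intro i hk hxi
        by_cases h0 : i.val = 0
        · have : i = ⟨0, hn⟩ := Fin.ext h0
          rwa [this] at hxi
        · by_cases hc : i.val = r-1 ∨ i.val = r+s-2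
          · have := hstep' i hxi h0
            rwa [sig_eq0 i hc hn] at this
          · have hb : i.val + 1 < r+s-1 := by have := i.isLt; omega
            have hpos := hstep' i hxi h0
            rw [sig_eq i hc hb] at hpos
            exact ih ⟨i.val+1, hb⟩ (by simpa using by omega) hpos
    exact key (r+s-1) i (by omega) hi
  have h1b : (1:ℕ) < r+s-1 := by omega
  have hrb : r < r+s-1 := by omega
  -- equation at vertex 0
  have h0row : x ⟨1, h1b⟩ + x ⟨r, hrb⟩ = lam * x ⟨0, hn⟩ := by
    have := hcomp ⟨0, hn⟩ reach0
    rw [mulVec_apply hr hs, if_pos rfl] at this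
    have hsig : sig r s ⟨0, hn⟩ = ⟨1, h1b⟩ :=
      sig_eq ⟨0, hn⟩ (by push_neg; constructor <;> (show ¬(0 = _); omega)) h1b
    rwa [hsig] at this
  -- the two chains
  have hchain1 : 0 < x ⟨1, h1b⟩ → ∀ j (hb : 1+j < r+s-1), j ≤ r-2 →
      x ⟨1+j, hb⟩ = lam^j * x ⟨1, h1b⟩ ∧ 0 < x ⟨1+j, hb⟩ := by
    intro h1p j
    induction j with
    | zero => intro hb _; simpa using h1p
    | succ j ih =>
      intro hb hj
      have hb' : 1+j < r+s-1 := by omega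
      obtain ⟨e, p⟩ := ih hb' (by omega)
      have hc : ¬((1+j : ℕ) = r-1 ∨ (1+j : ℕ) = r+s-2) := by omega
      have hsig : sig r s ⟨1+j, hb'⟩ = ⟨1+(j+1), hb⟩ := by
        rw [sig_eq ⟨1+j, hb'⟩ hc (by show 1+j+1 < r+s-1; omega)]
        exact Fin.ext (by show 1+j+1 = 1+(j+1); omega)
      have hst := hstep ⟨1+j, hb'⟩ p (by show (1+j:ℕ) ≠ 0; omega)
      rw [hsig] at hst
      constructor
      · rw [hst, e, pow_succ]; ring
      · rw [hst]; positivity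
  have hchain2 : 0 < x ⟨r, hrb⟩ → ∀ j (hb : r+j < r+s-1), j ≤ s-2 →
      x ⟨r+j, hb⟩ = lam^j * x ⟨r, hrb⟩ ∧ 0 < x ⟨r+j, hb⟩ := by
    intro hrp j
    induction j with
    | zero => intro hb _; simpa using hrp
    | succ j ih =>
      intro hb hj
      have hb' : r+j < r+s-1 := by omega
      obtain ⟨e, p⟩ := ih hb' (by omega)
      have hc : ¬((r+j : ℕ) = r-1 ∨ (r+j : ℕ) = r+s-2) := by omega
      have hsig : sig r s ⟨r+j, hb'⟩ = ⟨r+(j+1), hb⟩ := by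
        rw [sig_eq ⟨r+j, hb'⟩ hc (by show r+j+1 < r+s-1; omega)]
        exact Fin.ext (by show r+j+1 = r+(j+1); omega)
      have hst := hstep ⟨r+j, hb'⟩ p (by show (r+j:ℕ) ≠ 0; omega)
      rw [hsig] at hst
      constructor
      · rw [hst, e, pow_succ]; ring
      · rw [hst]; positivity
  -- lam = 1 helper
  have lam_eq_one : ∀ m : ℕ, m ≠ 0 → lam ^ m = 1 → lam = 1 := by
    intro m hm hpow
    rcases lt_trichotomy lam 1 with h' | h' | h'
    · exfalso
      have := pow_lt_one₀ hlam.le h' hm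
      rw [hpow] at this; exact lt_irrefl _ this
    · exact h'
    · exfalso
      have := one_lt_pow₀ h' hm
      rw [hpow] at this; exact lt_irrefl _ this
  by_cases h1p : 0 < x ⟨1, h1b⟩
  · by_cases hrp : 0 < x ⟨r, hrb⟩
    · -- both branches positive: x is everywhere positive, genuine eigenvector
      right
      have hpos : ∀ i, 0 < x i := by
        intro i
        have hi := i.isLt
        by_cases h0 : i.val = 0
        · have : i = ⟨0, hn⟩ := Fin.ext h0
          rwa [this]
        · by_cases hcr : i.val ≤ r-1
          · have hb : 1 + (i.val - 1) < r+s-1 := by omega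
            have := (hchain1 h1p (i.val - 1) hb (by omega)).2
            have hie : i = ⟨1 + (i.val-1), hb⟩ := Fin.ext (by show i.val = 1+(i.val-1); omega)
            rwa [hie]
          · have hb : r + (i.val - r) < r+s-1 := by omega
            have := (hchain2 hrp (i.val - r) hb (by omega)).2
            have hie : i = ⟨r + (i.val-r), hb⟩ := Fin.ext (by show i.val = r+(i.val-r); omega)
            rwa [hie]
      exact ⟨hlam, x, hpos, funext fun i => by
        rw [hcomp i (hpos i), Pi.smul_apply, smul_eq_mul]⟩
    · -- only the r-cycle: lam^r = 1
      left
      have hxr : x ⟨r, hrb⟩ = 0 := le_antisymm (not_lt.1 hrp) (hxnn _)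
      have hx1 : x ⟨1, h1b⟩ = lam * x ⟨0, hn⟩ := by
        rw [hxr, add_zero] at h0row; exact h0row
      have hbr : 1 + (r-2) < r+s-1 := by omega
      obtain ⟨e, p⟩ := hchain1 h1p (r-2) hbr (le_refl _)
      have hc : ((1 + (r-2) : ℕ) = r-1 ∨ (1 + (r-2) : ℕ) = r+s-2) := Or.inl (by omega)
      have hsig : sig r s ⟨1+(r-2), hbr⟩ = ⟨0, hn⟩ := sig_eq0 _ hc hn
      have hst := hstep ⟨1+(r-2), hbr⟩ p (by show (1+(r-2):ℕ) ≠ 0; omega)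
      rw [hsig] at hst
      have hp : lam^(r-1) * lam = lam^r := by
        rw [← pow_succ]; congr 1; omega
      have e2 : x ⟨0, hn⟩ = lam^(r-1) * x ⟨1, h1b⟩ := by
        rw [hst, e, show r-1 = (r-2)+1 by omega, pow_succ]; ring
      have hx0eq : x ⟨0, hn⟩ = lam^r * x ⟨0, hn⟩ := by
        calc x ⟨0, hn⟩ = lam^(r-1) * x ⟨1, h1b⟩ := e2
          _ = lam^(r-1) * (lam * x ⟨0, hn⟩) := by rw [hx1]
          _ = lam^r * x ⟨0, hn⟩ := by rw [← hp]; ring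
      have : lam ^ r = 1 := by
        have h' : (lam^r - 1) * x ⟨0, hn⟩ = 0 := by linarith
        rcases mul_eq_zero.1 h' with h'' | h''
        · linarith
        · exact absurd h'' reach0.ne'
      exact lam_eq_one r (by omega) this
  · -- only the s-cycle: lam^s = 1
    left
    have hx1 : x ⟨1, h1b⟩ = 0 := le_antisymm (not_lt.1 h1p) (hxnn _)
    have hrp : 0 < x ⟨r, hrb⟩ := by
      rcases lt_or_eq_of_le (show (0:ℝ) ≤ x ⟨r, hrb⟩ from hxnn ⟨r, hrb⟩) with h' | h'
      · exact h'
      · exfalso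
        rw [hx1, ← h', add_zero] at h0row
        nlinarith [reach0]
    have hxr : x ⟨r, hrb⟩ = lam * x ⟨0, hn⟩ := by
      rw [hx1, zero_add] at h0row; exact h0row
    have hbr : r + (s-2) < r+s-1 := by omega
    obtain ⟨e, p⟩ := hchain2 hrp (s-2) hbr (le_refl _)
    have hc : ((r + (s-2) : ℕ) = r-1 ∨ (r + (s-2) : ℕ) = r+s-2) := Or.inr (by omega)
    have hsig : sig r s ⟨r+(s-2), hbr⟩ = ⟨0, hn⟩ := sig_eq0 _ hc hn
    have hst := hstep ⟨r+(s-2), hbr⟩ p (by show (r+(s-2):ℕ) ≠ 0; omega)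
    rw [hsig] at hst
    have hp : lam^(s-1) * lam = lam^s := by
      rw [← pow_succ]; congr 1; omega
    have e2 : x ⟨0, hn⟩ = lam^(s-1) * x ⟨r, hrb⟩ := by
      rw [hst, e, show s-1 = (s-2)+1 by omega, pow_succ]; ring
    have hx0eq : x ⟨0, hn⟩ = lam^s * x ⟨0, hn⟩ := by
      calc x ⟨0, hn⟩ = lam^(s-1) * x ⟨r, hrb⟩ := e2
        _ = lam^(s-1) * (lam * x ⟨0, hn⟩) := by rw [hxr]
        _ = lam^s * x ⟨0, hn⟩ := by rw [← hp]; ring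
    have : lam ^ s = 1 := by
      have h' : (lam^s - 1) * x ⟨0, hn⟩ = 0 := by linarith
      rcases mul_eq_zero.1 h' with h'' | h''
      · linarith
      · exact absurd h'' reach0.ne'
    exact lam_eq_one s (by omega) this

end Infty

namespace Infty
variable {r s : ℕ}

lemma zero_mem (hr : 2 ≤ r) (hs : 2 ≤ s) : isComplEig (adjMat (inftyAdj r s)) 0 := by
  have hn : 0 < r+s-1 := by omega
  refine ⟨fun i => if i.val = 0 then 1 else 0, ?_, ?_, ?_, ?_⟩
  · intro h
    have := congrFun h ⟨0, hn⟩
    simp at this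
  · intro i; dsimp; split_ifs <;> norm_num
  · have h := mulVec_nonneg (inftyAdj r s) (x := fun i => if i.val = 0 then (1:ℝ) else 0)
      (by intro i; dsimp; split_ifs <;> norm_num)
    simpa using h
  · apply Finset.sum_eq_zero
    intro i _
    by_cases h0 : i.val = 0
    · have hv : (adjMat (inftyAdj r s)).mulVec (fun i => if i.val = 0 then (1:ℝ) else 0) i
          = 0 := by
        rw [mulVec_apply hr hs, if_pos h0]
        have h1 : (sig r s i).val = 1 := by
          rw [sig_val, if_neg (by omega)]; omega
        rw [h1]
        norm_num
        omega
      simp [hv]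
    · simp [h0]

lemma one_mem (hr : 2 ≤ r) (hs : 2 ≤ s) : isComplEig (adjMat (inftyAdj r s)) 1 := by
  have hn : 0 < r+s-1 := by omega
  set x : Fin (r+s-1) → ℝ := fun i => if i.val ≤ r-1 then 1 else 0 with hx
  have hxv : ∀ j : Fin (r+s-1), x j = if j.val ≤ r-1 then (1:ℝ) else 0 := fun j => rfl
  have hxnn : 0 ≤ x := by
    intro i
    show (0:ℝ) ≤ x i
    rw [hxv]; split_ifs <;> norm_num
  have hkey : ∀ i : Fin (r+s-1), i.val ≤ r-1 →
      (adjMat (inftyAdj r s)).mulVec x i = 1 := by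
    intro i hi
    rw [mulVec_apply hr hs]
    have hsv := sig_val (r := r) (s := s) i
    by_cases h0 : i.val = 0
    · rw [if_pos h0]
      have h1 : (sig r s i).val = 1 := by rw [hsv, if_neg (by omega)]; omega
      have e1 : x (sig r s i) = 1 := by rw [hxv, h1, if_pos (by omega)]
      have e2 : x ⟨r, by omega⟩ = 0 := by rw [hxv]; exact if_neg (by show ¬(r ≤ r-1); omega)
      rw [e1, e2]; norm_num
    · rw [if_neg h0, add_zero]
      have hle : (sig r s i).val ≤ r - 1 := by
        rw [hsv]; split_ifs with hcond
        · omega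
        · have := i.isLt; omega
      rw [hxv, if_pos hle]
  refine ⟨x, ?_, hxnn, ?_, ?_⟩
  · intro h
    have := congrFun h ⟨0, hn⟩
    rw [hxv] at this
    have h2 : ((⟨0, hn⟩ : Fin (r+s-1)).val ≤ r - 1) := Nat.zero_le _
    rw [if_pos h2] at this
    norm_num at this
  · intro i
    simp only [Pi.zero_apply, Pi.sub_apply, Pi.smul_apply, smul_eq_mul, one_mul]
    by_cases hi : i.val ≤ r-1
    · rw [hkey i hi, hxv, if_pos hi]; norm_num
    · rw [hxv, if_neg hi, sub_zero]
      simpa using mulVec_nonneg (inftyAdj r s) hxnn i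
  · apply Finset.sum_eq_zero
    intro i _
    by_cases hi : i.val ≤ r-1
    · have h2 : ((adjMat (inftyAdj r s)).mulVec x - (1:ℝ) • x) i = 0 := by
        simp only [Pi.sub_apply, Pi.smul_apply, smul_eq_mul, one_mul]
        rw [hkey i hi, hxv, if_pos hi]; norm_num
      rw [h2, mul_zero]
    · rw [hxv, if_neg hi, zero_mul]

lemma main (hr : 2 ≤ r) (hs : 2 ≤ s) :
    {lam : ℝ | isComplEig (adjMat (inftyAdj r s)) lam} =
      {0, 1, specRad (adjMat (inftyAdj r s))} ∧
    1 < specRad (adjMat (inftyAdj r s)) := by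
  obtain ⟨l, hl1, hleq⟩ := exists_rho hr hs
  have hl0 : 0 < l := by linarith
  have heig := xv_eig hr hs hl0 hleq
  have hn : 0 < r+s-1 := by omega
  have hspec : specRad (adjMat (inftyAdj r s)) = l :=
    posEig_specRad hn _ (fun i j => entry_nonneg _ i j) hl0 (xv_pos hl0) heig
  constructor
  · ext lam
    simp only [Set.mem_setOf_eq, Set.mem_insert_iff, Set.mem_singleton_iff]
    constructor
    · intro h
      rcases Pi_subset hr hs h with h' | h' | ⟨hpos, y, hy, hyeq⟩
      · exact Or.inl h'
      · exact Or.inr (Or.inl h')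
      · refine Or.inr (Or.inr ?_)
        have h2 : specRad (adjMat (inftyAdj r s)) = lam :=
          posEig_specRad hn _ (fun i j => entry_nonneg (inftyAdj r s) i j) hpos hy hyeq
        exact h2.symm
    · rintro (rfl | rfl | rfl)
      · exact zero_mem hr hs
      · exact one_mem hr hs
      · rw [hspec]
        refine ⟨xv r s l, ?_, fun i => (xv_pos hl0 i).le, ?_, ?_⟩
        · intro h
          have := congrFun h ⟨0, hn⟩
          exact (xv_pos hl0 ⟨0, hn⟩).ne' this
        · rw [heig, sub_self]
        · rw [heig, sub_self]
          simp
  · rw [hspec]; exact hl1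

end Infty

theorem stmt12 (r s : ℕ) (hr : 2 ≤ r) (hs : 2 ≤ s) :
    {lam : ℝ | isComplEig (adjMat (inftyAdj r s)) lam} =
      {0, 1, specRad (adjMat (inftyAdj r s))} ∧
    1 < specRad (adjMat (inftyAdj r s)) :=
  Infty.main hr hs
end
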